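/- arXiv:1402.2456 — 7 statements merged into one kernel-verified Lean document; each statement's English description precedes it below -/
import Mathlib

section
/- Let X = {x₁, …, x_l} and Y = {−y₁, …, −y_m} be disjoint nonempty sets of odd integers, where x₁ > ⋯ > x_l are positive odd integers and y₁ < ⋯ < y_m are positive odd integers. Let L = x₁ + ⋯ + x_l, M = y₁ + ⋯ + y_m and n = lM + mL. Then there exists a tournament of order n whose imbalance set is X ∪ Y. -/
/-- A tournament on `Fin n`: loopless, and between any two distinct vertices
there is exactly one arc. -/
def IsTournament {n : ℕ} (r : Fin n → Fin n → Bool) : Prop :=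
  (∀ i, r i i = false) ∧ ∀ i j : Fin n, i ≠ j → (r i j = !(r j i))

/-- The score (outdegree) of vertex `i`. -/
def outdeg {n : ℕ} (r : Fin n → Fin n → Bool) (i : Fin n) : ℕ :=
  (Finset.univ.filter fun j => r i j = true).card

/-- The indegree of vertex `i`. -/
def indeg {n : ℕ} (r : Fin n → Fin n → Bool) (i : Fin n) : ℕ :=
  (Finset.univ.filter fun j => r j i = true).card

/-- The imbalance of vertex `i`: outdegree minus indegree. -/
def imbalance {n : ℕ} (r : Fin n → Fin n → Bool) (i : Fin n) : ℤ :=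
  (outdeg r i : ℤ) - (indeg r i : ℤ)

/-- The imbalance set of a digraph. -/
def imbalanceSet {n : ℕ} (r : Fin n → Fin n → Bool) : Finset ℤ :=
  Finset.image (imbalance r) Finset.univ

/-!
For a positive odd `x = 2t + 1` and a negative odd `y = -(2s + 1)`, let a regular tournament on
`2s + 1` vertices dominate a regular tournament on `2t + 1` vertices: the result has even order
`x - y` and imbalance set `{x, y}`. Take one such block for every pair `(x, y) ∈ X × Y`; their
orders add up to `lM + mL`. Adding the blocks one at a time, orient the arcs between the new block
and the rest in a checkerboard pattern: as both sides have even order, every vertex wins exactly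
half of these arcs and keeps its imbalance.
-/

def RealizableImbalanceSet (n : ℕ) (T : Finset ℤ) : Prop :=
  ∃ r : Fin n → Fin n → Bool, IsTournament r ∧ imbalanceSet r = T

lemma imbalance_eq_sum {n : ℕ} (r : Fin n → Fin n → Bool) (i : Fin n) :
    imbalance r i = ∑ j, (((r i j).toNat : ℤ) - (r j i).toNat) := by
  simp only [imbalance, outdeg, indeg, Finset.card_filter, Finset.sum_sub_distrib]
  push_cast
  congr 1 <;> exact Finset.sum_congr rfl fun j _ => by cases r _ _ <;> rfl

lemma imbalanceSet_eq_union {a b : ℕ} (r : Fin (a + b) → Fin (a + b) → Bool) :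
    imbalanceSet r = Finset.univ.image (fun i => imbalance r (Fin.castAdd b i)) ∪
      Finset.univ.image (fun j => imbalance r (Fin.natAdd a j)) := by
  ext z
  simp only [imbalanceSet, Finset.mem_union, Finset.mem_image, Finset.mem_univ, true_and]
  constructor
  · rintro ⟨u, rfl⟩
    induction u using Fin.addCases <;> simp
  · rintro (⟨i, rfl⟩ | ⟨j, rfl⟩) <;> exact ⟨_, rfl⟩

def rotational (t : ℕ) : Fin (2 * t + 1) → Fin (2 * t + 1) → Bool :=
  fun u v => decide (0 < (v - u).val ∧ (v - u).val ≤ t)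

lemma isTournament_rotational (t : ℕ) : IsTournament (rotational t) := by
  refine ⟨fun i => by simp [rotational], fun i j hij => ?_⟩
  have hne : (j - i).val ≠ 0 := fun h => hij (sub_eq_zero.mp (Fin.ext h)).symm
  have hval : (i - j).val = 2 * t + 1 - (j - i).val := by
    rw [← neg_sub, Fin.val_neg', Nat.mod_eq_of_lt (by omega)]
  simp only [rotational, hval, ← decide_not]
  exact decide_eq_decide.mpr (by omega)

lemma imbalance_rotational (t : ℕ) (u : Fin (2 * t + 1)) : imbalance (rotational t) u = 0 := by
  suffices outdeg (rotational t) u = indeg (rotational t) u by simp [imbalance, this]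
  -- the reflection `v ↦ 2u - v` swaps out-neighbours and in-neighbours of `u`
  refine Finset.card_nbij' (fun v => u + u - v) (fun v => u + u - v) ?_ ?_ ?_ ?_ <;>
    intro v <;>
    simp [rotational, show u - (u + u - v) = v - u by abel, show u + u - v - u = u - v by abel]

section Glue

variable {a b : ℕ}

def glue (r₁ : Fin a → Fin a → Bool) (r₂ : Fin b → Fin b → Bool) (c : Fin a → Fin b → Bool) :
    Fin (a + b) → Fin (a + b) → Bool :=
  Fin.addCases (fun i => Fin.addCases (r₁ i) (c i))
    (fun j => Fin.addCases (fun i => !c i j) (r₂ j))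

variable (r₁ : Fin a → Fin a → Bool) (r₂ : Fin b → Fin b → Bool) (c : Fin a → Fin b → Bool)

@[simp] lemma glue_castAdd_castAdd (i j : Fin a) :
    glue r₁ r₂ c (Fin.castAdd b i) (Fin.castAdd b j) = r₁ i j := by
  simp [glue]

@[simp] lemma glue_castAdd_natAdd (i : Fin a) (j : Fin b) :
    glue r₁ r₂ c (Fin.castAdd b i) (Fin.natAdd a j) = c i j := by
  simp [glue]

@[simp] lemma glue_natAdd_castAdd (j : Fin b) (i : Fin a) :
    glue r₁ r₂ c (Fin.natAdd a j) (Fin.castAdd b i) = !c i j := by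
  simp [glue]

@[simp] lemma glue_natAdd_natAdd (i j : Fin b) :
    glue r₁ r₂ c (Fin.natAdd a i) (Fin.natAdd a j) = r₂ i j := by
  simp [glue]

variable {r₁ r₂} in
lemma isTournament_glue (h₁ : IsTournament r₁) (h₂ : IsTournament r₂) :
    IsTournament (glue r₁ r₂ c) := by
  refine ⟨fun i => ?_, fun i j hij => ?_⟩
  · induction i using Fin.addCases <;> simp [h₁.1, h₂.1]
  · induction i using Fin.addCases <;> induction j using Fin.addCases
    · simpa using h₁.2 _ _ (by simpa using hij)
    · simp
    · simp
    · simpa using h₂.2 _ _ (by simpa using hij)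

lemma imbalance_glue_castAdd (i : Fin a) :
    imbalance (glue r₁ r₂ c) (Fin.castAdd b i) =
      imbalance r₁ i + ∑ j, (((c i j).toNat : ℤ) - (!c i j).toNat) := by
  simp only [imbalance_eq_sum, Finset.sum_sub_distrib, Fin.sum_univ_add, glue_castAdd_castAdd,
    glue_castAdd_natAdd, glue_natAdd_castAdd]
  ring

lemma imbalance_glue_natAdd (j : Fin b) :
    imbalance (glue r₁ r₂ c) (Fin.natAdd a j) =
      imbalance r₂ j - ∑ i, (((c i j).toNat : ℤ) - (!c i j).toNat) := by
  simp only [imbalance_eq_sum, Finset.sum_sub_distrib, Fin.sum_univ_add, glue_natAdd_castAdd,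
    glue_natAdd_natAdd, glue_castAdd_natAdd]
  ring

end Glue

lemma sum_neg_one_pow_of_even {b : ℕ} (hb : Even b) : ∑ j : Fin b, (-1 : ℤ) ^ (j : ℕ) = 0 := by
  obtain ⟨m, rfl⟩ := hb
  rw [Fin.sum_univ_eq_sum_range (fun j => (-1 : ℤ) ^ j)]
  induction m with
  | zero => simp
  | succ m ih =>
    rw [show m + 1 + (m + 1) = m + m + 1 + 1 by ring, Finset.sum_range_succ, Finset.sum_range_succ,
      ih, pow_succ]
    ring

namespace RealizableImbalanceSet

lemma zero : RealizableImbalanceSet 0 ∅ :=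
  ⟨fun _ _ => false, ⟨fun i => i.elim0, fun i => i.elim0⟩, by simp [imbalanceSet]⟩

lemma union {a b : ℕ} {T₁ T₂ : Finset ℤ} (ha : Even a) (hb : Even b)
    (h₁ : RealizableImbalanceSet a T₁) (h₂ : RealizableImbalanceSet b T₂) :
    RealizableImbalanceSet (a + b) (T₁ ∪ T₂) := by
  obtain ⟨r₁, hr₁, rfl⟩ := h₁
  obtain ⟨r₂, hr₂, rfl⟩ := h₂
  let c : Fin a → Fin b → Bool := fun i j => decide (Even ((i : ℕ) + j))
  have hsign (i : Fin a) (j : Fin b) :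
      ((c i j).toNat : ℤ) - (!c i j).toNat = (-1) ^ (i : ℕ) * (-1) ^ (j : ℕ) := by
    rw [← pow_add]
    rcases Nat.even_or_odd ((i : ℕ) + j) with h | h
    · simp [c, h, h.neg_one_pow]
    · simp [c, Nat.not_even_iff_odd.mpr h, h.neg_one_pow]
  refine ⟨glue r₁ r₂ c, isTournament_glue c hr₁ hr₂, ?_⟩
  simp only [imbalanceSet_eq_union, imbalance_glue_castAdd, imbalance_glue_natAdd, hsign,
    ← Finset.mul_sum, ← Finset.sum_mul, sum_neg_one_pow_of_even ha, sum_neg_one_pow_of_even hb,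
    mul_zero, zero_mul, add_zero, sub_zero]
  rfl

lemma sum_biUnion {ι : Type*} [DecidableEq ι] (s : Finset ι) (N : ι → ℕ) (T : ι → Finset ℤ)
    (h : ∀ k ∈ s, Even (N k) ∧ RealizableImbalanceSet (N k) (T k)) :
    RealizableImbalanceSet (∑ k ∈ s, N k) (s.biUnion T) := by
  induction s using Finset.induction_on with
  | empty => simpa using zero
  | insert k s hk ih =>
    have hs : ∀ j ∈ s, Even (N j) ∧ RealizableImbalanceSet (N j) (T j) :=
      fun j hj => h j (Finset.mem_insert_of_mem hj)
    rw [Finset.sum_insert hk, Finset.biUnion_insert]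
    exact union (h k (Finset.mem_insert_self k s)).1 (Finset.even_sum _ fun j hj => (hs j hj).1)
      (h k (Finset.mem_insert_self k s)).2 (ih hs)

end RealizableImbalanceSet

lemma realizableImbalanceSet_pair {x y : ℤ} (hx : 0 < x) (hxo : Odd x) (hy : y < 0)
    (hyo : Odd y) : Even (x - y).toNat ∧ RealizableImbalanceSet (x - y).toNat {x, y} := by
  obtain ⟨t, rfl⟩ : ∃ t : ℕ, x = 2 * t + 1 := by
    obtain ⟨k, rfl⟩ := hxo; exact ⟨k.toNat, by omega⟩
  obtain ⟨s, rfl⟩ : ∃ s : ℕ, y = -(2 * s + 1) := by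
    obtain ⟨k, rfl⟩ := hyo; exact ⟨(-k - 1).toNat, by omega⟩
  rw [show (2 * (t : ℤ) + 1 - -(2 * s + 1)).toNat = (2 * s + 1) + (2 * t + 1) by omega]
  refine ⟨⟨s + t + 1, by ring⟩, glue (rotational s) (rotational t) (fun _ _ => true),
    isTournament_glue _ (isTournament_rotational s) (isTournament_rotational t), ?_⟩
  simp [imbalanceSet_eq_union, imbalance_glue_castAdd, imbalance_glue_natAdd,
    imbalance_rotational, Finset.image_const]

lemma Finset.biUnion_product_pair {α : Type*} [DecidableEq α] {s t : Finset α}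
    (hs : s.Nonempty) (ht : t.Nonempty) : (s ×ˢ t).biUnion (fun p => {p.1, p.2}) = s ∪ t := by
  ext z
  simp only [Finset.mem_biUnion, Finset.mem_product, Finset.mem_insert, Finset.mem_singleton,
    Finset.mem_union, Prod.exists]
  constructor
  · rintro ⟨x, y, ⟨hx, hy⟩, rfl | rfl⟩
    exacts [Or.inl hx, Or.inr hy]
  · rintro (hz | hz)
    · obtain ⟨y, hy⟩ := ht
      exact ⟨z, y, ⟨hz, hy⟩, Or.inl rfl⟩
    · obtain ⟨x, hx⟩ := hs
      exact ⟨x, z, ⟨hx, hz⟩, Or.inr rfl⟩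

lemma Finset.sum_product_sub {R : Type*} [AddCommGroup R] (s t : Finset R) :
    ∑ p ∈ s ×ˢ t, (p.1 - p.2) = t.card • ∑ x ∈ s, x - s.card • ∑ y ∈ t, y := by
  simp [Finset.sum_product, Finset.sum_sub_distrib, Finset.smul_sum, Finset.sum_comm (s := s)]

theorem odd_imbalanceSet_realizable_general (X Y : Finset ℤ)
    (hXne : X.Nonempty) (hYne : Y.Nonempty)
    (hX : ∀ x ∈ X, 0 < x ∧ Odd x) (hY : ∀ y ∈ Y, y < 0 ∧ Odd y)
    (L M : ℤ) (hL : L = ∑ x ∈ X, x) (hM : M = ∑ y ∈ Y, -y)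
    (n : ℕ) (hn : (n : ℤ) = X.card * M + Y.card * L) :
    ∃ r : Fin n → Fin n → Bool, IsTournament r ∧ imbalanceSet r = X ∪ Y := by
  have hblocks : ∀ p ∈ X ×ˢ Y,
      Even (p.1 - p.2).toNat ∧ RealizableImbalanceSet (p.1 - p.2).toNat {p.1, p.2} := by
    intro p hp
    rw [Finset.mem_product] at hp
    exact realizableImbalanceSet_pair (hX _ hp.1).1 (hX _ hp.1).2 (hY _ hp.2).1 (hY _ hp.2).2
  have horder : n = ∑ p ∈ X ×ˢ Y, (p.1 - p.2).toNat := by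
    have hpos : ∀ p ∈ X ×ˢ Y, 0 ≤ p.1 - p.2 := fun p hp => by
      rw [Finset.mem_product] at hp
      linarith [(hX _ hp.1).1, (hY _ hp.2).1]
    zify
    rw [Finset.sum_congr rfl fun p hp => Int.toNat_of_nonneg (hpos p hp),
      Finset.sum_product_sub, hn, hL, hM, Finset.sum_neg_distrib]
    simp only [nsmul_eq_mul]
    ring
  subst horder
  rw [← Finset.biUnion_product_pair hXne hYne]
  exact RealizableImbalanceSet.sum_biUnion _ _ _ hblocks

/-- Any disjoint nonempty sets `X` of positive odd integers and `Y` of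
negative odd integers form the imbalance set of a tournament of order
`n = l*M + m*L`. -/
theorem odd_imbalanceSet_realizable (X Y : Finset ℤ)
    (hXne : X.Nonempty) (hYne : Y.Nonempty) (hdisj : Disjoint X Y)
    (hX : ∀ x ∈ X, 0 < x ∧ Odd x) (hY : ∀ y ∈ Y, y < 0 ∧ Odd y)
    (L M : ℤ) (hL : L = ∑ x ∈ X, x) (hM : M = ∑ y ∈ Y, -y)
    (n : ℕ) (hn : (n : ℤ) = X.card * M + Y.card * L) :
    ∃ r : Fin n → Fin n → Bool, IsTournament r ∧ imbalanceSet r = X ∪ Y :=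
  odd_imbalanceSet_realizable_general X Y hXne hYne hX hY L M hL hM n hn
end

section
/- Let x₁ > ⋯ > x_l be positive odd integers and y₁ < ⋯ < y_m be positive odd integers with {x₁,…,x_l} and {−y₁,…,−y_m} disjoint. Let L = x₁ + ⋯ + x_l, M = y₁ + ⋯ + y_m and n = lM + mL. Consider the nonincreasing n-term sequence [t_i] in which each x_j (j = 1,…,l) appears M consecutive times followed by each −y_j (j = 1,…,m) appearing L consecutive times. Then for every j with 1 ≤ j ≤ n, the partial sum t₁ + ⋯ + t_j is at most j(n − j), with equality when j = n. -/
/-- The partial sums of the sequence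
`x₁^(M), …, x_l^(M), (−y₁)^(L), …, (−y_m)^(L)` satisfy
`t₁ + ⋯ + t_j ≤ j(n − j)` for `1 ≤ j ≤ n`, with equality when `j = n`. -/
theorem partial_sums_bound (l m : ℕ) (hl : 0 < l) (hm : 0 < m)
    (x : Fin l → ℤ) (y : Fin m → ℤ) (hx : StrictAnti x) (hy : StrictMono y)
    (hxo : ∀ i, 0 < x i ∧ Odd (x i)) (hyo : ∀ i, 0 < y i ∧ Odd (y i))
    (hdisj : ∀ i j, x i ≠ -(y j))
    (L M n : ℕ) (hL : (L : ℤ) = ∑ i, x i) (hM : (M : ℤ) = ∑ i, y i)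
    (hn : n = l * M + m * L)
    (t : List ℤ)
    (ht : t = (List.ofFn fun i => List.replicate M (x i)).flatten ++
              (List.ofFn fun i => List.replicate L (-(y i))).flatten) :
    (∀ j : ℕ, 1 ≤ j → j ≤ n → (t.take j).sum ≤ (j : ℤ) * ((n : ℤ) - (j : ℤ))) ∧
      (t.take n).sum = (n : ℤ) * ((n : ℤ) - (n : ℤ)) := by
  have hlen : t.length = n := by
    subst ht hn
    simp [List.length_flatten, List.map_ofFn, Function.comp, List.sum_ofFn,
      Finset.sum_const, mul_comm]
  have hL0 : (0:ℤ) ≤ (L:ℤ) := Nat.cast_nonneg _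
  have hM0 : (0:ℤ) ≤ (M:ℤ) := Nat.cast_nonneg _
  have hub : ∀ a ∈ t, a ≤ (L:ℤ) := by
    intro a ha
    rw [ht] at ha
    simp only [List.mem_append, List.mem_flatten, List.mem_ofFn, List.mem_replicate] at ha
    rcases ha with ⟨lst, ⟨i, rfl⟩, hmem⟩ | ⟨lst, ⟨i, rfl⟩, hmem⟩ <;>
      rw [List.mem_replicate] at hmem <;> rw [hmem.2]
    · rw [hL]; exact Finset.single_le_sum (fun i _ => (hxo i).1.le) (Finset.mem_univ i)
    · linarith [(hyo i).1]
  have hlb : ∀ a ∈ t, -(M:ℤ) ≤ a := by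
    intro a ha
    rw [ht] at ha
    simp only [List.mem_append, List.mem_flatten, List.mem_ofFn, List.mem_replicate] at ha
    rcases ha with ⟨lst, ⟨i, rfl⟩, hmem⟩ | ⟨lst, ⟨i, rfl⟩, hmem⟩ <;>
      rw [List.mem_replicate] at hmem <;> rw [hmem.2]
    · linarith [(hxo i).1]
    · simp only [neg_le_neg_iff]
      rw [hM]; exact Finset.single_le_sum (fun i _ => (hyo i).1.le) (Finset.mem_univ i)
  have hsum : t.sum = 0 := by
    rw [ht]
    simp [List.sum_append, List.sum_flatten, List.map_ofFn, Function.comp,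
      List.sum_ofFn, List.sum_replicate, smul_eq_mul]
    rw [← Finset.mul_sum, ← Finset.mul_sum, ← hL, ← hM]
    ring
  have hMl : M ≤ l * M := Nat.le_mul_of_pos_left M hl
  have hLm : L ≤ m * L := Nat.le_mul_of_pos_left L hm
  constructor
  · intro j hj1 hjn
    have htl : (t.take j).length = j := by rw [List.length_take, hlen]; omega
    by_cases hc : L + j ≤ n
    · have h1 : (t.take j).sum ≤ (t.take j).length • (L:ℤ) :=
        List.sum_le_card_nsmul _ _ (fun a ha => hub a (List.take_subset _ _ ha))
      rw [htl, nsmul_eq_mul] at h1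
      have h2 : (L:ℤ) ≤ (n:ℤ) - (j:ℤ) := by push_cast; omega
      calc (t.take j).sum ≤ (j:ℤ) * (L:ℤ) := h1
        _ ≤ (j:ℤ) * ((n:ℤ) - (j:ℤ)) := by
          apply mul_le_mul_of_nonneg_left h2 (by positivity)
    · have hdl : (t.drop j).length = n - j := by rw [List.length_drop, hlen]
      have h1 : ((t.drop j).length : ℤ) * (-(M:ℤ)) ≤ (t.drop j).sum := by
        have := List.card_nsmul_le_sum (t.drop j) (-(M:ℤ))
          (fun a ha => hlb a (List.drop_subset _ _ ha))
        rwa [nsmul_eq_mul] at this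
      have hts : (t.take j).sum + (t.drop j).sum = 0 := by
        rw [← List.sum_append, List.take_append_drop, hsum]
      have hMj : M ≤ j := by omega
      have h2 : (t.take j).sum ≤ ((n - j : ℕ):ℤ) * (M:ℤ) := by
        rw [hdl] at h1; nlinarith [h1, hts]
      calc (t.take j).sum ≤ ((n - j : ℕ):ℤ) * (M:ℤ) := h2
        _ ≤ ((n - j : ℕ):ℤ) * (j:ℤ) := by
          apply mul_le_mul_of_nonneg_left (by exact_mod_cast hMj) (Nat.cast_nonneg _)
        _ = (j:ℤ) * ((n:ℤ) - (j:ℤ)) := by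
          rw [Nat.cast_sub hjn]; ring
  · rw [← hlen, List.take_length, hsum]; ring
end

section
/- A finite nonempty set of odd integers is the imbalance set of some tournament if and only if it contains at least one positive integer and at least one negative integer. -/
/-! The imbalances of any digraph sum to zero, so a set of odd (hence nonzero) imbalances
contains numbers of both signs.

Conversely, pick `p > 0` and `q < 0` in `Z`. Every `z ∈ Z` lies in a pair `{z, q}` or `{p, z}`
of odd integers of opposite signs, and a pair `{a, -b}` is the imbalance set of a regular
tournament on `b` vertices beating a regular tournament on `a` vertices. This tournament has
even order, and two tournaments of even order can be joined, orienting the arcs between them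
according to balanced 2-colourings of both, so that these arcs contribute nothing to any
imbalance. Hence imbalance sets of tournaments of even order are closed under union. -/

open Finset

def IsTournamentOn {α : Type*} (r : α → α → Bool) : Prop :=
  (∀ v, r v v = false) ∧ ∀ v w, v ≠ w → r v w = !r w v

def arcSign {α : Type*} (r : α → α → Bool) (v w : α) : ℤ :=
  (if r v w then 1 else 0) - if r w v then 1 else 0

section NetDegree

variable {α β : Type*} [Fintype α] [Fintype β]

def netDegree (r : α → α → Bool) (v : α) : ℤ :=
  ∑ w, arcSign r v w

lemma imbalance_eq_netDegree {n : ℕ} (r : Fin n → Fin n → Bool) :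
    imbalance r = netDegree r := by
  funext i
  simp only [imbalance, outdeg, indeg, netDegree, arcSign, sum_sub_distrib, sum_boole]

lemma sum_netDegree_eq_zero (r : α → α → Bool) : ∑ v, netDegree r v = 0 := by
  simp only [netDegree, arcSign, sum_sub_distrib]
  exact sub_eq_zero.mpr sum_comm

lemma netDegree_comp_equiv (e : β ≃ α) (r : α → α → Bool) (v : β) :
    netDegree (fun x y => r (e x) (e y)) v = netDegree r (e v) :=
  Equiv.sum_comp e (arcSign r (e v))

end NetDegree

section Circulant

variable {G : Type*} [AddGroup G]

def circulant (p : G → Bool) (v w : G) : Bool :=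
  p (w - v)

lemma isTournamentOn_circulant {p : G → Bool} (h0 : p 0 = false)
    (hneg : ∀ d ≠ 0, p (-d) = !p d) : IsTournamentOn (circulant p) := by
  refine ⟨fun v => by simp [circulant, h0], fun v w hvw => ?_⟩
  rw [circulant, circulant, ← neg_sub v w, hneg _ (sub_ne_zero.mpr hvw)]

variable [Fintype G]

lemma netDegree_circulant (p : G → Bool) (v : G) : netDegree (circulant p) v = 0 := by
  have hout : ∑ w, (if circulant p v w then (1 : ℤ) else 0) = ∑ d, if p d then 1 else 0 :=
    Equiv.sum_comp (Equiv.subRight v) fun d => if p d then (1 : ℤ) else 0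
  have hin : ∑ w, (if circulant p w v then (1 : ℤ) else 0) = ∑ d, if p d then 1 else 0 :=
    Equiv.sum_comp (Equiv.subLeft v) fun d => if p d then (1 : ℤ) else 0
  simp only [netDegree, arcSign, sum_sub_distrib, hout, hin, sub_self]

end Circulant

lemma exists_regular_tournament (k : ℕ) :
    ∃ r : ZMod (2 * k + 1) → ZMod (2 * k + 1) → Bool,
      IsTournamentOn r ∧ ∀ v, netDegree r v = 0 := by
  refine ⟨circulant fun d => decide (1 ≤ d.val ∧ d.val ≤ k), ?_, netDegree_circulant _⟩
  refine isTournamentOn_circulant (by simp) fun d hd => ?_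
  have hpos : d.val ≠ 0 := (ZMod.val_ne_zero d).mpr hd
  have hlt := ZMod.val_lt d
  rw [ZMod.neg_val, if_neg hd, ← decide_not, decide_eq_decide]
  omega

section Sum

variable {α β : Type*}

def sumRel (r : α → α → Bool) (s : β → β → Bool) (cross : α → β → Bool) :
    α ⊕ β → α ⊕ β → Bool
  | .inl a, .inl a' => r a a'
  | .inl a, .inr b => cross a b
  | .inr b, .inl a => !cross a b
  | .inr b, .inr b' => s b b'

lemma isTournamentOn_sumRel {r : α → α → Bool} {s : β → β → Bool} (hr : IsTournamentOn r)
    (hs : IsTournamentOn s) (cross : α → β → Bool) : IsTournamentOn (sumRel r s cross) := by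
  refine ⟨?_, ?_⟩
  · rintro (a | b)
    exacts [hr.1 a, hs.1 b]
  · rintro (a | b) (a' | b') hne
    · exact hr.2 a a' fun h => hne (congrArg _ h)
    · simp [sumRel]
    · simp [sumRel]
    · exact hs.2 b b' fun h => hne (congrArg _ h)

variable [Fintype α] [Fintype β]

lemma netDegree_sumRel_inl (r : α → α → Bool) (s : β → β → Bool) (cross : α → β → Bool)
    (a : α) :
    netDegree (sumRel r s cross) (.inl a) = netDegree r a + ∑ b, if cross a b then 1 else -1 := by
  simp only [netDegree, Fintype.sum_sum_type]
  congr 1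
  refine sum_congr rfl fun b _ => ?_
  cases h : cross a b <;> simp [arcSign, sumRel, h]

lemma netDegree_sumRel_inr (r : α → α → Bool) (s : β → β → Bool) (cross : α → β → Bool)
    (b : β) :
    netDegree (sumRel r s cross) (.inr b) = netDegree s b - ∑ a, if cross a b then 1 else -1 := by
  rw [netDegree, Fintype.sum_sum_type, add_comm, sub_eq_add_neg, ← sum_neg_distrib]
  congr 1
  refine sum_congr rfl fun a _ => ?_
  cases h : cross a b <;> simp [arcSign, sumRel, h]

end Sum

lemma exists_balanced_coloring {α : Type*} [Fintype α] (h : Even (Fintype.card α)) :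
    ∃ col : α → Bool, ∀ c, ∑ a, (if col a = c then (1 : ℤ) else -1) = 0 := by
  obtain ⟨k, hk⟩ := h
  let e : α ≃ Bool × Fin k := Fintype.equivOfCardEq (by simp [hk, two_mul])
  refine ⟨fun a => (e a).1, fun c => ?_⟩
  rw [Equiv.sum_comp e fun x => if x.1 = c then (1 : ℤ) else -1, Fintype.sum_prod_type]
  cases c <;> simp

def IsEvenOrderImbalanceSet (S : Finset ℤ) : Prop :=
  ∃ (α : Type) (_ : Fintype α) (r : α → α → Bool),
    Even (Fintype.card α) ∧ IsTournamentOn r ∧ univ.image (netDegree r) = S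

lemma IsEvenOrderImbalanceSet.union {S T : Finset ℤ} (hS : IsEvenOrderImbalanceSet S)
    (hT : IsEvenOrderImbalanceSet T) : IsEvenOrderImbalanceSet (S ∪ T) := by
  obtain ⟨α, _, r, hα, hr, rfl⟩ := hS
  obtain ⟨β, _, s, hβ, hs, rfl⟩ := hT
  obtain ⟨colα, hcolα⟩ := exists_balanced_coloring hα
  obtain ⟨colβ, hcolβ⟩ := exists_balanced_coloring hβ
  let t := sumRel r s fun a b => decide (colα a = colβ b)
  have hinl (a : α) : netDegree t (.inl a) = netDegree r a := by
    simp [t, netDegree_sumRel_inl, eq_comm (a := colα a), hcolβ]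
  have hinr (b : β) : netDegree t (.inr b) = netDegree s b := by
    simp [t, netDegree_sumRel_inr, hcolα]
  refine ⟨α ⊕ β, inferInstance, t, ?_, isTournamentOn_sumRel hr hs _, ?_⟩
  · simpa only [Fintype.card_sum] using hα.add hβ
  · ext z
    simp [Sum.exists, hinl, hinr]

lemma isEvenOrderImbalanceSet_pair {a b : ℤ} (ha : 0 < a) (hb : b < 0) (hao : Odd a)
    (hbo : Odd b) : IsEvenOrderImbalanceSet {a, b} := by
  obtain ⟨i, rfl⟩ := hao
  obtain ⟨j, rfl⟩ := hbo
  lift i to ℕ using (by omega)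
  obtain ⟨j, rfl⟩ : ∃ j' : ℕ, j = -(j' : ℤ) - 1 := ⟨(-j - 1).toNat, by omega⟩
  obtain ⟨r, hr, hr0⟩ := exists_regular_tournament i
  obtain ⟨s, hs, hs0⟩ := exists_regular_tournament j
  refine ⟨ZMod (2 * j + 1) ⊕ ZMod (2 * i + 1), inferInstance, sumRel s r fun _ _ => true, ?_,
    isTournamentOn_sumRel hs hr _, ?_⟩
  · simp only [Fintype.card_sum, ZMod.card]
    exact ⟨i + j + 1, by ring⟩
  · ext z
    simp [Sum.exists, netDegree_sumRel_inl, netDegree_sumRel_inr, hr0, hs0]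
    omega

lemma isEvenOrderImbalanceSet_insert_insert {p q : ℤ} (hp : 0 < p) (hq : q < 0) (hpo : Odd p)
    (hqo : Odd q) (Y : Finset ℤ) (hY : ∀ z ∈ Y, Odd z) :
    IsEvenOrderImbalanceSet (insert p (insert q Y)) := by
  induction Y using Finset.induction_on with
  | empty => exact isEvenOrderImbalanceSet_pair hp hq hpo hqo
  | insert z Y _ ih =>
    have hY' := ih fun y hy => hY y (mem_insert_of_mem hy)
    have hz := hY z (mem_insert_self z Y)
    rcases (show z ≠ 0 by rintro rfl; simp at hz).lt_or_gt with hneg | hpos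
    · convert hY'.union (isEvenOrderImbalanceSet_pair hp hneg hpo hz) using 1
      ext
      simp only [mem_insert, mem_union, mem_singleton]
      tauto
    · convert hY'.union (isEvenOrderImbalanceSet_pair hpos hq hz hqo) using 1
      ext
      simp only [mem_insert, mem_union, mem_singleton]
      tauto

lemma exists_fin_tournament_of_isTournamentOn {α : Type*} [Fintype α] {r : α → α → Bool}
    (hr : IsTournamentOn r) :
    ∃ (n : ℕ) (r' : Fin n → Fin n → Bool), IsTournament r' ∧
      imbalanceSet r' = univ.image (netDegree r) := by
  let e := (Fintype.equivFin α).symm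
  refine ⟨_, fun i j => r (e i) (e j), ⟨fun i => hr.1 _, fun i j h => hr.2 _ _ (e.injective.ne h)⟩,
    ?_⟩
  have hdeg : netDegree (fun i j => r (e i) (e j)) = netDegree r ∘ e :=
    funext (netDegree_comp_equiv e r)
  classical
  rw [imbalanceSet, imbalance_eq_netDegree, hdeg, ← image_image, image_univ_equiv]

lemma exists_pos_and_neg_of_sum_eq_zero {ι M : Type*} [AddCommGroup M] [LinearOrder M]
    [IsOrderedAddMonoid M] {s : Finset ι} {f : ι → M} (hs : s.Nonempty)
    (hsum : ∑ i ∈ s, f i = 0) (hf : ∀ i ∈ s, f i ≠ 0) :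
    (∃ i ∈ s, 0 < f i) ∧ ∃ i ∈ s, f i < 0 := by
  obtain ⟨i, hi⟩ := hs
  refine ⟨exists_pos_of_sum_zero_of_exists_nonzero f hsum ⟨i, hi, hf i hi⟩, ?_⟩
  obtain ⟨j, hj, hpos⟩ := exists_pos_of_sum_zero_of_exists_nonzero (fun i => -f i)
    (by rw [sum_neg_distrib, hsum, neg_zero]) ⟨i, hi, neg_ne_zero.mpr (hf i hi)⟩
  exact ⟨j, hj, neg_pos.mp hpos⟩

/-- A finite nonempty set of odd integers is a tournament imbalance
set iff it contains a positive and a negative integer. -/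
theorem odd_imbalanceSet_iff (Z : Finset ℤ) (hZne : Z.Nonempty)
    (hodd : ∀ z ∈ Z, Odd z) :
    (∃ (n : ℕ) (r : Fin n → Fin n → Bool), IsTournament r ∧ imbalanceSet r = Z) ↔
      (∃ z ∈ Z, 0 < z) ∧ (∃ z ∈ Z, z < 0) := by
  constructor
  · rintro ⟨n, r, -, rfl⟩
    have hmem (i : Fin n) : imbalance r i ∈ imbalanceSet r := mem_image_of_mem _ (mem_univ i)
    have hsum : ∑ i, imbalance r i = 0 := by
      rw [imbalance_eq_netDegree]
      exact sum_netDegree_eq_zero r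
    have hne (i : Fin n) (_ : i ∈ univ) : imbalance r i ≠ 0 := by
      intro h
      simpa [h] using hodd _ (hmem i)
    obtain ⟨⟨i, -, hi⟩, ⟨j, -, hj⟩⟩ :=
      exists_pos_and_neg_of_sum_eq_zero (image_nonempty.mp hZne) hsum hne
    exact ⟨⟨_, hmem i, hi⟩, ⟨_, hmem j, hj⟩⟩
  · rintro ⟨⟨p, hpZ, hp⟩, ⟨q, hqZ, hq⟩⟩
    obtain ⟨α, _, r, -, hr, hZ⟩ :=
      isEvenOrderImbalanceSet_insert_insert hp hq (hodd p hpZ) (hodd q hqZ) Z hodd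
    rw [insert_eq_of_mem hqZ, insert_eq_of_mem hpZ] at hZ
    exact hZ ▸ exists_fin_tournament_of_isTournamentOn hr
end

section
/- Let X = {x₁, …, x_l} and Y = {−y₁, …, −y_m} be disjoint nonempty sets of even integers, where x₁ > ⋯ > x_l are non-negative even integers and y₁ < ⋯ < y_m are positive even integers, with X ∪ Y ≠ {0}. Let L = x₁ + ⋯ + x_l, M = y₁ + ⋯ + y_m and n = lM + mL. If there exist −y_p ∈ Y and (not necessarily distinct) x_q, x_r ∈ X such that y_p = x_q + x_r, then there exists a tournament of order n + 3 whose imbalance set is X ∪ Y. -/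
namespace TImb

lemma S_lemma (j : ℕ) (m : ℕ) :
    ∑ i ∈ Finset.range m, ((-1:ℤ))^(j+i) = if Even m then 0 else (-1)^j := by
  induction m with
  | zero => simp
  | succ m ih =>
    rw [Finset.sum_range_succ, ih, pow_add]
    rcases Nat.even_or_odd m with h | h
    · simp [h, Nat.even_add_one, Nat.not_even_iff_odd, h.neg_one_pow]
    · simp [Nat.even_add_one, Nat.not_even_iff_odd.mpr h, h.neg_one_pow]

lemma thr (b m : ℕ) (hb : b ≤ m) :
    ∑ i ∈ Finset.range m, (if i < b then (1:ℤ) else -1) = 2*b - m := by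
  rw [Finset.range_eq_Ico, ← Finset.sum_Ico_consecutive _ (Nat.zero_le b) hb]
  have h1 : ∑ i ∈ Finset.Ico 0 b, (if i < b then (1:ℤ) else -1) = b := by
    have hc : ∀ i ∈ Finset.Ico 0 b, (if i < b then (1:ℤ) else -1) = 1 := by
      intro i hi; simp at hi; simp [hi]
    rw [Finset.sum_congr rfl hc, Finset.sum_const, Nat.card_Ico]; simp
  have h2 : ∑ i ∈ Finset.Ico b m, (if i < b then (1:ℤ) else -1) = -((m:ℤ) - b) := by
    have hc : ∀ i ∈ Finset.Ico b m, (if i < b then (1:ℤ) else -1) = -1 := by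
      intro i hi; simp at hi
      have : ¬ i < b := by omega
      simp [this]
    rw [Finset.sum_congr rfl hc, Finset.sum_const, Nat.card_Ico]
    simp
    push_cast [hb]
    ring
  rw [h1, h2]; ring

lemma evcount (s : ℕ) : ∑ k ∈ Finset.range s, (if Even k then (1:ℕ) else 0) = (s+1)/2 := by
  induction s with
  | zero => simp
  | succ s ih =>
    rw [Finset.sum_range_succ, ih]
    rcases Nat.even_or_odd s with h | h
    · rw [Nat.even_iff] at h; simp [Nat.even_iff, h]; omega
    · rw [Nat.odd_iff] at h; simp [Nat.even_iff, h]; omega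

lemma N_lemma (t k : ℕ) (hk : k < 2*t) :
    ∑ k' ∈ Finset.range (2*t),
      (if k' = k then 0 else (-1:ℤ)^(k+k') * (if k < k' then 1 else -1))
    = if Even k then -1 else 1 := by
  rw [Finset.range_eq_Ico,
    ← Finset.sum_Ico_consecutive _ (Nat.zero_le (k+1)) (by omega : k+1 ≤ 2*t)]
  have h1 : ∑ k' ∈ Finset.Ico 0 (k+1),
      (if k' = k then 0 else (-1:ℤ)^(k+k') * (if k < k' then 1 else -1))
      = if Even k then 0 else 1 := by
    rw [← Finset.range_eq_Ico, Finset.sum_range_succ]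
    have hcon : ∀ k' ∈ Finset.range k,
        (if k' = k then 0 else (-1:ℤ)^(k+k') * (if k < k' then 1 else -1))
        = -((-1:ℤ))^(k+k') := by
      intro k' hk'; simp at hk'
      have e1 : k' ≠ k := by omega
      have e2 : ¬ (k < k') := by omega
      simp [e1, e2]
    rw [Finset.sum_congr rfl hcon]
    have hz : (if k = k then (0:ℤ) else (-1:ℤ)^(k+k) * (if k < k then 1 else -1)) = 0 := by simp
    rw [hz, add_zero, Finset.sum_neg_distrib, S_lemma]
    rcases Nat.even_or_odd k with h | h
    · simp [h]
    · simp [Nat.not_even_iff_odd.mpr h, h.neg_one_pow]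
  have h2 : ∑ k' ∈ Finset.Ico (k+1) (2*t),
      (if k' = k then 0 else (-1:ℤ)^(k+k') * (if k < k' then 1 else -1))
      = if Even k then -1 else 0 := by
    have hcon : ∀ k' ∈ Finset.Ico (k+1) (2*t),
        (if k' = k then 0 else (-1:ℤ)^(k+k') * (if k < k' then 1 else -1))
        = ((-1:ℤ))^(k+k') := by
      intro k' hk'; simp at hk'
      have e1 : k' ≠ k := by omega
      have e2 : k < k' := by omega
      simp [e1, e2]
    rw [Finset.sum_congr rfl hcon, Finset.sum_Ico_eq_sum_range]
    have hcon2 : ∀ i ∈ Finset.range (2*t - (k+1)), ((-1:ℤ))^(k+(k+1+i)) = ((-1:ℤ))^(2*k+1+i) := by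
      intro i hi; congr 1; omega
    rw [Finset.sum_congr rfl hcon2, S_lemma]
    rcases Nat.even_or_odd k with h | h
    · rw [Nat.even_iff] at h
      have he : ¬ Even (2*t - (k+1)) := by rw [Nat.even_iff]; omega
      have ho : Odd (2*k+1) := ⟨k, by ring⟩
      simp [he, h, Nat.even_iff, ho.neg_one_pow]
    · rw [Nat.odd_iff] at h
      have he : Even (2*t - (k+1)) := by rw [Nat.even_iff]; omega
      simp [he, Nat.even_iff, h]
  rw [h1, h2]
  rcases Nat.even_or_odd k with h | h
  · simp [h]
  · simp [Nat.not_even_iff_odd.mpr h]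

/-- within-block arc sign: positions `< a` form the A part, the rest the B part. -/
def inrule (a k k' : ℕ) : ℤ :=
  if k = k' then 0
  else if k < a ∧ a ≤ k' then 1
  else if k' < a ∧ a ≤ k then -1
  else (-1:ℤ)^(k+k') * (if k < k' then 1 else -1)

lemma inrule_diag (a k : ℕ) : inrule a k k = 0 := by simp [inrule]

lemma inrule_antisymm (a k k' : ℕ) : inrule a k' k = - inrule a k k' := by
  unfold inrule
  rcases eq_or_ne k k' with rfl | h
  · simp
  · have h' : k' ≠ k := Ne.symm h
    simp only [h, h', if_false]
    by_cases p1 : k < a ∧ a ≤ k'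
    · have p2 : ¬ (k' < a ∧ a ≤ k) := by omega
      simp [p1, p2]
    · by_cases p2 : k' < a ∧ a ≤ k
      · simp [p1, p2]
      · simp only [p1, p2, if_false]
        rcases Nat.lt_or_ge k k' with h3 | h3
        · have e3 : ¬ (k' < k) := by omega
          simp [h3, e3, Nat.add_comm k' k]
        · have e3 : k' < k := by omega
          have e4 : ¬ (k < k') := by omega
          simp [e3, e4, Nat.add_comm k' k]

lemma inrule_pm (a k k' : ℕ) (h : k ≠ k') : inrule a k k' = 1 ∨ inrule a k k' = -1 := by
  unfold inrule
  simp only [h, if_false]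
  split_ifs
  · left; rfl
  · right; rfl
  · rcases Nat.even_or_odd (k+k') with he | ho
    · rw [he.neg_one_pow]; left; norm_num
    · rw [ho.neg_one_pow]; right; norm_num
  · rcases Nat.even_or_odd (k+k') with he | ho
    · rw [he.neg_one_pow]; right; norm_num
    · rw [ho.neg_one_pow]; left; norm_num

lemma block_sum (a b k : ℕ) (ha : Even a) (hb : Even b) (hk : k < a + b) :
    ∑ k' ∈ Finset.range (a+b), inrule a k k'
    = (if k < a then (b:ℤ) else -(a:ℤ)) + (if Even k then -1 else 1) := by
  rw [Finset.range_eq_Ico, ← Finset.sum_Ico_consecutive _ (Nat.zero_le a) (by omega : a ≤ a + b)]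
  rcases Nat.lt_or_ge k a with hka | hka
  · have h1 : ∑ k' ∈ Finset.Ico 0 a, inrule a k k' = if Even k then -1 else 1 := by
      have hcon : ∀ k' ∈ Finset.Ico 0 a, inrule a k k'
          = (if k' = k then 0 else (-1:ℤ)^(k+k') * (if k < k' then 1 else -1)) := by
        intro k' hk'; simp at hk'
        unfold inrule
        rcases eq_or_ne k k' with rfl | hne
        · simp
        · have e1 : ¬ (k < a ∧ a ≤ k') := by omega
          have e2 : ¬ (k' < a ∧ a ≤ k) := by omega
          simp [hne, Ne.symm hne, e1, e2]
      rw [Finset.sum_congr rfl hcon, ← Finset.range_eq_Ico]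
      obtain ⟨t, ht⟩ := ha
      rw [show a = 2*t by omega]
      exact N_lemma t k (by omega)
    have h2 : ∑ k' ∈ Finset.Ico a (a+b), inrule a k k' = b := by
      have hcon : ∀ k' ∈ Finset.Ico a (a+b), inrule a k k' = 1 := by
        intro k' hk'; simp at hk'
        unfold inrule
        have e0 : k ≠ k' := by omega
        have e1 : k < a ∧ a ≤ k' := by omega
        simp [e0, e1]
      rw [Finset.sum_congr rfl hcon, Finset.sum_const, Nat.card_Ico]
      simp
    rw [h1, h2]; simp [hka]; ring
  · have h1 : ∑ k' ∈ Finset.Ico 0 a, inrule a k k' = -(a:ℤ) := by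
      have hcon : ∀ k' ∈ Finset.Ico 0 a, inrule a k k' = -1 := by
        intro k' hk'; simp at hk'
        unfold inrule
        have e0 : k ≠ k' := by omega
        have e1 : ¬ (k < a ∧ a ≤ k') := by omega
        have e2 : k' < a ∧ a ≤ k := by omega
        simp [e0, e1, e2]
      rw [Finset.sum_congr rfl hcon, Finset.sum_const, Nat.card_Ico]
      simp
    have h2 : ∑ k' ∈ Finset.Ico a (a+b), inrule a k k' = if Even k then -1 else 1 := by
      have hcon : ∀ k' ∈ Finset.Ico a (a+b), inrule a k k'
          = (if (k'-a) = (k-a) then 0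
             else (-1:ℤ)^((k-a)+(k'-a)) * (if (k-a) < (k'-a) then 1 else -1)) := by
        intro k' hk'; simp at hk'
        unfold inrule
        rcases eq_or_ne k k' with rfl | hne
        · simp
        · have e1 : ¬ (k < a ∧ a ≤ k') := by omega
          have e2 : ¬ (k' < a ∧ a ≤ k) := by omega
          have e3 : (k' - a = k - a) = False := by simp; omega
          have e4 : (k - a < k' - a) = (k < k') := by simp; omega
          have e5 : ((-1:ℤ))^((k-a)+(k'-a)) = ((-1:ℤ))^(k+k') := by
            have ha2 : a % 2 = 0 := Nat.even_iff.mp ha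
            rcases Nat.even_or_odd (k+k') with hp | hp
            · have hq : Even ((k-a)+(k'-a)) := by
                rw [Nat.even_iff] at hp ⊢; omega
              rw [hp.neg_one_pow, hq.neg_one_pow]
            · have hq : Odd ((k-a)+(k'-a)) := by
                rw [Nat.odd_iff] at hp ⊢; omega
              rw [hp.neg_one_pow, hq.neg_one_pow]
          simp only [hne, Ne.symm hne, if_false, e1, e2, e3, e4, e5]
      rw [Finset.sum_congr rfl hcon, Finset.sum_Ico_eq_sum_range]
      have hcon2 : ∀ i ∈ Finset.range (a + b - a),
          (if (a+i-a) = (k-a) then (0:ℤ)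
             else (-1:ℤ)^((k-a)+(a+i-a)) * (if (k-a) < (a+i-a) then 1 else -1))
          = (if i = (k-a) then 0
             else (-1:ℤ)^((k-a)+i) * (if (k-a) < i then 1 else -1)) := by
        intro i hi
        have : a + i - a = i := by omega
        rw [this]
      rw [Finset.sum_congr rfl hcon2]
      have hab : a + b - a = b := by omega
      rw [hab]
      obtain ⟨tb, htb⟩ := hb
      rw [show b = 2*tb by omega]
      rw [N_lemma tb (k-a) (by omega)]
      have ha2 : a % 2 = 0 := Nat.even_iff.mp ha
      rcases Nat.even_or_odd k with hke | hko
      · have h5 : Even (k - a) := by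
          have := Nat.even_iff.mp hke
          rw [Nat.even_iff]; omega
        simp [hke, h5]
      · have hk2 : k % 2 = 1 := Nat.odd_iff.mp hko
        have h5 : ¬ Even (k - a) := by
          rw [Nat.even_iff]; omega
        simp [h5, Nat.not_even_iff_odd.mpr hko]
    rw [h1, h2]
    have : ¬ (k < a) := by omega
    simp [this]

section Constr
variable (X Y : Finset ℤ)

def ap (p : ↥(X ×ˢ Y)) : ℕ := (-(p.1.2)).toNat
def bp (p : ↥(X ×ˢ Y)) : ℕ := (p.1.1).toNat
def sz (p : ↥(X ×ˢ Y)) : ℕ := ap X Y p + bp X Y p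
abbrev BV := Σ p : ↥(X ×ˢ Y), Fin (sz X Y p)
abbrev VV := BV X Y ⊕ Fin 3
noncomputable def ordB (p : ↥(X ×ˢ Y)) : ℕ := (Fintype.equivFin ↥(X ×ˢ Y) p : ℕ)

lemma ordB_inj {p p' : ↥(X ×ˢ Y)} (h : ordB X Y p = ordB X Y p') : p = p' :=
  (Fintype.equivFin ↥(X ×ˢ Y)).injective (Fin.ext h)

noncomputable def eE : {z : BV X Y // Even (z.2 : ℕ)} ≃
    Fin (Fintype.card {z : BV X Y // Even (z.2 : ℕ)}) := Fintype.equivFin _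
noncomputable def eO : {z : BV X Y // ¬ Even (z.2 : ℕ)} ≃
    Fin (Fintype.card {z : BV X Y // ¬ Even (z.2 : ℕ)}) := Fintype.equivFin _

noncomputable def bidx (z : BV X Y) : ℕ :=
  if h : Even (z.2 : ℕ) then (eE X Y ⟨z, h⟩ : ℕ) else (eO X Y ⟨z, h⟩ : ℕ)

def sigRow (b1 a2 : ℕ) (ev : Bool) (i : ℕ) (s : Fin 3) : ℤ :=
  if ev then
    (if s.val = 0 then (if i < b1 then -1 else 1)
     else if s.val = 1 then (if i < b1 then 1 else -1)
     else 1)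
  else
    (if s.val = 0 then -1
     else if s.val = 1 then (if i < a2 then 1 else -1)
     else (if i < a2 then -1 else 1))

def tri (s s' : Fin 3) : ℤ :=
  if s.val = s'.val then 0
  else if (s.val + 1) % 3 = s'.val then 1 else -1

noncomputable def cf (b1 a2 : ℕ) : VV X Y → VV X Y → ℤ
  | .inl z, .inl z' =>
      if z.1 = z'.1 then inrule (ap X Y z.1) (z.2 : ℕ) (z'.2 : ℕ)
      else (if ordB X Y z.1 < ordB X Y z'.1 then 1 else -1) * (-1:ℤ)^((z.2:ℕ)+(z'.2:ℕ))
  | .inl z, .inr s => sigRow b1 a2 (decide (Even (z.2:ℕ))) (bidx X Y z) s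
  | .inr s, .inl z => - sigRow b1 a2 (decide (Even (z.2:ℕ))) (bidx X Y z) s
  | .inr s, .inr s' => tri s s'

variable {X Y}

lemma sigma_val_ne {z z' : BV X Y} (hne : z ≠ z') (hp : z.1 = z'.1) :
    (z.2 : ℕ) ≠ (z'.2 : ℕ) := by
  rcases z with ⟨p, k⟩; rcases z' with ⟨p', k'⟩
  dsimp at hp; subst hp
  intro hv
  dsimp at hv
  exact hne (congrArg (Sigma.mk p) (Fin.ext hv))

lemma tri_antisymm (s s' : Fin 3) : tri s' s = - tri s s' := by
  fin_cases s <;> fin_cases s' <;> simp [tri]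

lemma cf_diag (b1 a2 : ℕ) (v : VV X Y) : cf X Y b1 a2 v v = 0 := by
  rcases v with z | s
  · simp [cf, inrule_diag]
  · simp [cf, tri]

lemma cf_antisymm (b1 a2 : ℕ) (v w : VV X Y) :
    cf X Y b1 a2 w v = - cf X Y b1 a2 v w := by
  rcases v with z | s <;> rcases w with z' | s'
  · show (if z'.1 = z.1 then _ else _) = -(if z.1 = z'.1 then _ else _)
    rcases eq_or_ne z.1 z'.1 with hp | hp
    · rcases z with ⟨p, k⟩; rcases z' with ⟨p', k'⟩
      dsimp at hp; subst hp
      simp only [if_pos rfl]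
      exact inrule_antisymm _ _ _
    · rw [if_neg (Ne.symm hp), if_neg hp]
      have hord : ordB X Y z.1 ≠ ordB X Y z'.1 := fun hc => hp (ordB_inj X Y hc)
      rcases Nat.lt_or_ge (ordB X Y z.1) (ordB X Y z'.1) with ho | ho
      · have : ¬ (ordB X Y z'.1 < ordB X Y z.1) := by omega
        simp [ho, this, Nat.add_comm (z'.2:ℕ) (z.2:ℕ)]
      · have h1 : ordB X Y z'.1 < ordB X Y z.1 := by omega
        have h2 : ¬ (ordB X Y z.1 < ordB X Y z'.1) := by omega
        simp [h1, h2, Nat.add_comm (z'.2:ℕ) (z.2:ℕ)]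
  · rfl
  · simp [cf]
  · exact tri_antisymm s s'

lemma cf_pm (b1 a2 : ℕ) (v w : VV X Y) (h : v ≠ w) :
    cf X Y b1 a2 v w = 1 ∨ cf X Y b1 a2 v w = -1 := by
  rcases v with z | s <;> rcases w with z' | s'
  · show (if z.1 = z'.1 then _ else _) = 1 ∨ (if z.1 = z'.1 then _ else _) = -1
    rcases eq_or_ne z.1 z'.1 with hp | hp
    · rw [if_pos hp]
      exact inrule_pm _ _ _ (sigma_val_ne (fun hc => h (by rw [hc])) hp)
    · rw [if_neg hp]
      rcases Nat.even_or_odd ((z.2:ℕ)+(z'.2:ℕ)) with he | ho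
      · rw [he.neg_one_pow]
        split_ifs <;> norm_num
      · rw [ho.neg_one_pow]
        split_ifs <;> norm_num
  · show sigRow b1 a2 _ _ s' = 1 ∨ sigRow b1 a2 _ _ s' = -1
    unfold sigRow
    split_ifs <;> norm_num
  · show -sigRow b1 a2 _ _ s = 1 ∨ -sigRow b1 a2 _ _ s = -1
    unfold sigRow
    split_ifs <;> norm_num
  · have hss : s ≠ s' := fun hc => h (by rw [hc])
    show tri s s' = 1 ∨ tri s s' = -1
    fin_cases s <;> fin_cases s' <;> simp_all [tri]

-- block facts
lemma ap_even (hY : ∀ y ∈ Y, y < 0 ∧ Even y) (p : ↥(X ×ˢ Y)) : Even (ap X Y p) := by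
  obtain ⟨hx, hy⟩ := Finset.mem_product.mp p.2
  obtain ⟨hy1, hy2⟩ := hY _ hy
  rw [Nat.even_iff]
  rw [Int.even_iff] at hy2
  unfold ap
  omega

lemma bp_even (hX : ∀ x ∈ X, 0 ≤ x ∧ Even x) (p : ↥(X ×ˢ Y)) : Even (bp X Y p) := by
  obtain ⟨hx, hy⟩ := Finset.mem_product.mp p.2
  obtain ⟨hx1, hx2⟩ := hX _ hx
  rw [Nat.even_iff]
  rw [Int.even_iff] at hx2
  unfold bp
  omega

lemma ap_cast (hY : ∀ y ∈ Y, y < 0 ∧ Even y) (p : ↥(X ×ˢ Y)) :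
    ((ap X Y p : ℕ) : ℤ) = -(p.1.2) := by
  obtain ⟨hx, hy⟩ := Finset.mem_product.mp p.2
  have := (hY _ hy).1
  unfold ap
  omega

lemma bp_cast (hX : ∀ x ∈ X, 0 ≤ x ∧ Even x) (p : ↥(X ×ˢ Y)) :
    ((bp X Y p : ℕ) : ℤ) = p.1.1 := by
  obtain ⟨hx, hy⟩ := Finset.mem_product.mp p.2
  have := (hX _ hx).1
  unfold bp
  omega

-- row sum for a block vertex
lemma rowsum_inl (b1 a2 : ℕ) (hX : ∀ x ∈ X, 0 ≤ x ∧ Even x)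
    (hY : ∀ y ∈ Y, y < 0 ∧ Even y) (z : BV X Y) :
    ∑ w : VV X Y, cf X Y b1 a2 (.inl z) w
      = if (z.2 : ℕ) < ap X Y z.1 then z.1.1.1 else z.1.1.2 := by
  rw [Fintype.sum_sum_type]
  have hspec : ∑ s : Fin 3, cf X Y b1 a2 (.inl z) (.inr s)
      = if Even (z.2:ℕ) then 1 else -1 := by
    show ∑ s : Fin 3, sigRow b1 a2 (decide (Even (z.2:ℕ))) (bidx X Y z) s = _
    by_cases hev : Even (z.2:ℕ)
    · rw [decide_eq_true hev, if_pos hev, Fin.sum_univ_three]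
      simp only [sigRow]
      norm_num
      split_ifs <;> norm_num
    · rw [decide_eq_false hev, if_neg hev, Fin.sum_univ_three]
      simp only [sigRow]
      norm_num
      split_ifs <;> norm_num
  have hblk : ∑ z' : BV X Y, cf X Y b1 a2 (.inl z) (.inl z')
      = (if (z.2:ℕ) < ap X Y z.1 then ((bp X Y z.1 : ℕ):ℤ) else -((ap X Y z.1 : ℕ):ℤ))
        + (if Even (z.2:ℕ) then -1 else 1) := by
    rw [← Finset.univ_sigma_univ, Finset.sum_sigma]
    rw [Finset.sum_eq_sum_sdiff_singleton_add (Finset.mem_univ z.1)]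
    have hzero : ∀ p' ∈ Finset.univ \ {z.1},
        ∑ k' : Fin (sz X Y p'), cf X Y b1 a2 (.inl z) (.inl ⟨p', k'⟩) = 0 := by
      intro p' hp'
      have hne : p' ≠ z.1 := by simpa using (Finset.mem_sdiff.mp hp').2
      have hthis : ∀ k' : Fin (sz X Y p'), cf X Y b1 a2 (.inl z) (.inl ⟨p', k'⟩)
          = (if ordB X Y z.1 < ordB X Y p' then 1 else -1) * (-1:ℤ)^((z.2:ℕ)+(k':ℕ)) := by
        intro k'
        show (if z.1 = p' then _ else _) = _
        rw [if_neg (Ne.symm hne)]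
      rw [Finset.sum_congr rfl (fun k' _ => hthis k'), ← Finset.mul_sum]
      rw [Fin.sum_univ_eq_sum_range (fun k' => ((-1:ℤ))^((z.2:ℕ)+k')) (sz X Y p')]
      rw [S_lemma]
      have hev : Even (sz X Y p') := (ap_even hY p').add (bp_even hX p')
      simp [hev]
    rw [Finset.sum_congr rfl hzero, Finset.sum_const_zero, zero_add]
    have hthis : ∀ k' : Fin (sz X Y z.1), cf X Y b1 a2 (.inl z) (.inl ⟨z.1, k'⟩)
        = inrule (ap X Y z.1) (z.2:ℕ) (k':ℕ) := by
      intro k'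
      show (if z.1 = z.1 then _ else _) = _
      rw [if_pos rfl]
    rw [Finset.sum_congr rfl (fun k' _ => hthis k')]
    rw [Fin.sum_univ_eq_sum_range (fun k' => inrule (ap X Y z.1) (z.2:ℕ) k') (sz X Y z.1)]
    exact block_sum (ap X Y z.1) (bp X Y z.1) (z.2:ℕ) (ap_even hY z.1) (bp_even hX z.1)
      z.2.isLt
  rw [hspec, hblk]
  rw [bp_cast hX, ap_cast hY]
  by_cases hk : (z.2:ℕ) < ap X Y z.1 <;> by_cases he : Even (z.2:ℕ) <;>
    (simp [hk, he]; try ring)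

lemma bidx_even {z : BV X Y} (h : Even (z.2:ℕ)) :
    bidx X Y z = (eE X Y ⟨z, h⟩ : ℕ) := by rw [bidx, dif_pos h]
lemma bidx_odd {z : BV X Y} (h : ¬ Even (z.2:ℕ)) :
    bidx X Y z = (eO X Y ⟨z, h⟩ : ℕ) := by rw [bidx, dif_neg h]

lemma two_cE (hX : ∀ x ∈ X, 0 ≤ x ∧ Even x) (hY : ∀ y ∈ Y, y < 0 ∧ Even y) :
    2 * Fintype.card {z : BV X Y // Even (z.2 : ℕ)} = Fintype.card (BV X Y) := by
  have h1 : Fintype.card {z : BV X Y // Even (z.2 : ℕ)}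
      = ∑ p : ↥(X ×ˢ Y), (sz X Y p) / 2 := by
    rw [Fintype.card_subtype, Finset.card_filter, ← Finset.univ_sigma_univ,
      Finset.sum_sigma]
    apply Finset.sum_congr rfl
    intro p _
    rw [Fin.sum_univ_eq_sum_range (fun k => if Even k then 1 else 0) (sz X Y p), evcount]
    have hev : Even (sz X Y p) := (ap_even hY p).add (bp_even hX p)
    obtain ⟨t, ht⟩ := hev
    omega
  rw [h1, Fintype.card_sigma, Finset.mul_sum]
  apply Finset.sum_congr rfl
  intro p _
  have hev : Even (sz X Y p) := (ap_even hY p).add (bp_even hX p)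
  obtain ⟨t, ht⟩ := hev
  simp
  omega

lemma sum_ev (f : ℕ → ℤ) :
    ∑ z : {z : BV X Y // Even (z.2:ℕ)}, f (bidx X Y z.val)
    = ∑ i ∈ Finset.range (Fintype.card {z : BV X Y // Even (z.2:ℕ)}), f i := by
  have h1 : ∀ z : {z : BV X Y // Even (z.2:ℕ)}, f (bidx X Y z.val) = f ((eE X Y z : ℕ)) := by
    intro z
    rw [bidx_even z.prop]
  rw [Finset.sum_congr rfl (fun z _ => h1 z), ← Fin.sum_univ_eq_sum_range (fun i => f i)]
  exact Equiv.sum_comp (eE X Y) (fun i => f (i:ℕ))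

lemma sum_od (f : ℕ → ℤ) :
    ∑ z : {z : BV X Y // ¬ Even (z.2:ℕ)}, f (bidx X Y z.val)
    = ∑ i ∈ Finset.range (Fintype.card {z : BV X Y // ¬ Even (z.2:ℕ)}), f i := by
  have h1 : ∀ z : {z : BV X Y // ¬ Even (z.2:ℕ)}, f (bidx X Y z.val) = f ((eO X Y z : ℕ)) := by
    intro z
    rw [bidx_odd z.prop]
  rw [Finset.sum_congr rfl (fun z _ => h1 z), ← Fin.sum_univ_eq_sum_range (fun i => f i)]
  exact Equiv.sum_comp (eO X Y) (fun i => f (i:ℕ))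

set_option maxHeartbeats 1000000 in
lemma rowsum_inr (b1 a2 : ℕ)
    (hb1 : b1 ≤ Fintype.card {z : BV X Y // Even (z.2 : ℕ)})
    (ha2 : a2 ≤ Fintype.card {z : BV X Y // ¬ Even (z.2 : ℕ)})
    (s : Fin 3) :
    ∑ w : VV X Y, cf X Y b1 a2 (.inr s) w
      = (if s.val = 0 then
            2*(b1:ℤ) - (Fintype.card {z : BV X Y // Even (z.2 : ℕ)} : ℤ)
              + (Fintype.card {z : BV X Y // ¬ Even (z.2 : ℕ)} : ℤ)
         else if s.val = 1 then
            (Fintype.card {z : BV X Y // Even (z.2 : ℕ)} : ℤ)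
              + (Fintype.card {z : BV X Y // ¬ Even (z.2 : ℕ)} : ℤ) - 2*b1 - 2*a2
         else
            2*(a2:ℤ) - (Fintype.card {z : BV X Y // Even (z.2 : ℕ)} : ℤ)
              - (Fintype.card {z : BV X Y // ¬ Even (z.2 : ℕ)} : ℤ)) := by
  rw [Fintype.sum_sum_type]
  have hsplit : ∑ z : BV X Y, cf X Y b1 a2 (.inr s) (.inl z)
      = (∑ z : {z : BV X Y // Even (z.2:ℕ)},
          (- sigRow b1 a2 true (bidx X Y z.val) s))
        + (∑ z : {z : BV X Y // ¬ Even (z.2:ℕ)},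
          (- sigRow b1 a2 false (bidx X Y z.val) s)) := by
    rw [← Equiv.sum_comp (Equiv.sumCompl (fun z : BV X Y => Even (z.2:ℕ)))
        (fun z => cf X Y b1 a2 (.inr s) (.inl z)), Fintype.sum_sum_type]
    congr 1
    · apply Finset.sum_congr rfl
      intro z _
      show cf X Y b1 a2 (.inr s) (.inl z.val) = _
      show - sigRow b1 a2 (decide (Even (z.val.2:ℕ))) (bidx X Y z.val) s = _
      rw [decide_eq_true z.prop]
    · apply Finset.sum_congr rfl
      intro z _
      show cf X Y b1 a2 (.inr s) (.inl z.val) = _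
      show - sigRow b1 a2 (decide (Even (z.val.2:ℕ))) (bidx X Y z.val) s = _
      rw [decide_eq_false z.prop]
  rw [hsplit, sum_ev (fun i => -sigRow b1 a2 true i s), sum_od (fun i => -sigRow b1 a2 false i s)]
  have htri : ∑ s' : Fin 3, cf X Y b1 a2 (.inr s) (.inr s') = 0 := by
    show ∑ s' : Fin 3, tri s s' = 0
    fin_cases s <;> (rw [Fin.sum_univ_three]; simp [tri])
  rw [htri, add_zero]
  -- per-entry evaluation lemmas for general s with a value hypothesis
  have e00 : s.val = 0 → ∀ i, - sigRow b1 a2 true i s = (if i < b1 then (1:ℤ) else -1) := by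
    intro hs i; unfold sigRow; rw [hs]; by_cases h : i < b1 <;> simp [h]
  have e01 : s.val = 0 → ∀ i, - sigRow b1 a2 false i s = (1:ℤ) := by
    intro hs i; unfold sigRow; rw [hs]; simp
  have e10 : s.val = 1 → ∀ i, - sigRow b1 a2 true i s = (if i < b1 then (-1:ℤ) else 1) := by
    intro hs i; unfold sigRow; rw [hs]; by_cases h : i < b1 <;> simp [h]
  have e11 : s.val = 1 → ∀ i, - sigRow b1 a2 false i s = (if i < a2 then (-1:ℤ) else 1) := by
    intro hs i; unfold sigRow; rw [hs]; by_cases h : i < a2 <;> simp [h]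
  have e20 : s.val = 2 → ∀ i, - sigRow b1 a2 true i s = (-1:ℤ) := by
    intro hs i; unfold sigRow; rw [hs]; simp
  have e21 : s.val = 2 → ∀ i, - sigRow b1 a2 false i s = (if i < a2 then (1:ℤ) else -1) := by
    intro hs i; unfold sigRow; rw [hs]; by_cases h : i < a2 <;> simp [h]
  have hneg : ∀ b m : ℕ, b ≤ m → ∑ i ∈ Finset.range m, (if i < b then (-1:ℤ) else 1)
      = m - 2*b := by
    intro b m hb
    have hcc : ∀ i ∈ Finset.range m, (if i < b then (-1:ℤ) else 1)
        = -(if i < b then (1:ℤ) else -1) := by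
      intro i _; split_ifs <;> norm_num
    rw [Finset.sum_congr rfl hcc, Finset.sum_neg_distrib, thr b m hb]
    ring
  have hs3 : s.val = 0 ∨ s.val = 1 ∨ s.val = 2 := by omega
  rcases hs3 with hs | hs | hs
  · rw [Finset.sum_congr rfl (fun i _ => e00 hs i),
      Finset.sum_congr rfl (fun i _ => e01 hs i), thr b1 _ hb1,
      Finset.sum_const, Finset.card_range, hs]
    simp only [if_pos rfl]
    push_cast
    ring
  · rw [Finset.sum_congr rfl (fun i _ => e10 hs i),
      Finset.sum_congr rfl (fun i _ => e11 hs i), hneg b1 _ hb1, hneg a2 _ ha2, hs]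
    rw [if_neg (by omega : ¬ (1:ℕ) = 0), if_pos rfl]
    push_cast
    ring
  · rw [Finset.sum_congr rfl (fun i _ => e20 hs i),
      Finset.sum_congr rfl (fun i _ => e21 hs i), thr a2 _ ha2,
      Finset.sum_const, Finset.card_range, hs]
    rw [if_neg (by omega : ¬ (2:ℕ) = 0), if_neg (by omega : ¬ (2:ℕ) = 1)]
    push_cast
    ring

end Constr
end TImb
namespace TImb
section Final
variable {X Y : Finset ℤ}

lemma card_BV (hX : ∀ x ∈ X, 0 ≤ x ∧ Even x) (hY : ∀ y ∈ Y, y < 0 ∧ Even y)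
    {L M : ℤ} (hL : L = ∑ x ∈ X, x) (hM : M = ∑ y ∈ Y, -y)
    {n : ℕ} (hn : (n : ℤ) = X.card * M + Y.card * L) :
    Fintype.card (BV X Y) = n := by
  rw [Fintype.card_sigma]
  have hz : (∑ p : ↥(X ×ˢ Y), ((sz X Y p : ℕ):ℤ)) = (n : ℤ) := by
    have h1 : ∀ p ∈ Finset.univ, ((sz X Y p:ℕ):ℤ) = p.1.1 - p.1.2 := by
      intro p _
      have hac := ap_cast hY p
      have hbc := bp_cast hX p
      unfold sz
      push_cast
      omega
    rw [Finset.sum_congr rfl h1]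
    rw [Finset.univ_eq_attach, Finset.sum_attach (X ×ˢ Y) (fun q => q.1 - q.2)]
    rw [Finset.sum_product]
    have h2 : ∀ x ∈ X, (∑ y ∈ Y, (x - y)) = Y.card * x + M := by
      intro x _
      rw [Finset.sum_sub_distrib, Finset.sum_const]
      have h3 : ∑ y ∈ Y, y = -M := by rw [hM, Finset.sum_neg_distrib]; ring
      rw [h3]
      simp [nsmul_eq_mul]
      try ring
    rw [Finset.sum_congr rfl h2, Finset.sum_add_distrib, Finset.sum_const, ← Finset.mul_sum,
      ← hL, hn]
    simp [nsmul_eq_mul]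
    try ring
  have hz2 : ((∑ p : ↥(X ×ˢ Y), Fintype.card (Fin (sz X Y p))) : ℤ) = (n:ℤ) := by
    rw [← hz]
    push_cast
    apply Finset.sum_congr rfl
    intro p _
    simp
  exact_mod_cast hz2

lemma imbalance_formula {N : ℕ} {α : Type*} [Fintype α] [DecidableEq α] (c : α → α → ℤ)
    (hdiag : ∀ v, c v v = 0) (hanti : ∀ v w, c w v = - c v w)
    (hpm : ∀ v w, v ≠ w → c v w = 1 ∨ c v w = -1)
    (e : α ≃ Fin N) (i : Fin N) :
    imbalance (fun i j => decide (c (e.symm i) (e.symm j) = 1)) i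
      = ∑ w : α, c (e.symm i) w := by
  have hout : ((outdeg (fun i j => decide (c (e.symm i) (e.symm j) = 1)) i : ℕ) : ℤ)
      = ∑ j : Fin N, (if c (e.symm i) (e.symm j) = 1 then (1:ℤ) else 0) := by
    unfold outdeg
    rw [Finset.card_filter, Nat.cast_sum]
    apply Finset.sum_congr rfl
    intro j _
    by_cases h : c (e.symm i) (e.symm j) = 1 <;> simp [h]
  have hin : ((indeg (fun i j => decide (c (e.symm i) (e.symm j) = 1)) i : ℕ) : ℤ)
      = ∑ j : Fin N, (if c (e.symm j) (e.symm i) = 1 then (1:ℤ) else 0) := by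
    unfold indeg
    rw [Finset.card_filter, Nat.cast_sum]
    apply Finset.sum_congr rfl
    intro j _
    by_cases h : c (e.symm j) (e.symm i) = 1 <;> simp [h]
  unfold imbalance
  rw [hout, hin, ← Finset.sum_sub_distrib]
  have hpt : ∀ j : Fin N, ((if c (e.symm i) (e.symm j) = 1 then (1:ℤ) else 0)
      - (if c (e.symm j) (e.symm i) = 1 then (1:ℤ) else 0)) = c (e.symm i) (e.symm j) := by
    intro j
    rcases eq_or_ne i j with rfl | hij
    · simp [hdiag]
    · have hvw : e.symm i ≠ e.symm j := fun hc => hij (e.symm.injective hc)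
      have hrev := hanti (e.symm i) (e.symm j)
      rcases hpm _ _ hvw with h1 | h1
      · rw [h1] at hrev ⊢
        rw [hrev]
        norm_num
      · rw [h1] at hrev ⊢
        rw [hrev]
        norm_num
  rw [Finset.sum_congr rfl (fun j _ => hpt j)]
  exact Equiv.sum_comp e.symm (fun w => c (e.symm i) w)

end Final
end TImb

open TImb in
/-- If some `-y_p ∈ Y` satisfies `y_p = x_q + x_r` with
`x_q, x_r ∈ X`, then there is a tournament of order `n + 3` with imbalance set
`X ∪ Y`. -/
theorem even_tournament_of_y_eq_add (X Y : Finset ℤ)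
    (hXne : X.Nonempty) (hYne : Y.Nonempty) (hdisj : Disjoint X Y)
    (hX : ∀ x ∈ X, 0 ≤ x ∧ Even x) (hY : ∀ y ∈ Y, y < 0 ∧ Even y)
    (hXY : X ∪ Y ≠ {0})
    (L M : ℤ) (hL : L = ∑ x ∈ X, x) (hM : M = ∑ y ∈ Y, -y)
    (n : ℕ) (hn : (n : ℤ) = X.card * M + Y.card * L)
    (h : ∃ yp : ℤ, -yp ∈ Y ∧ ∃ xq ∈ X, ∃ xr ∈ X, yp = xq + xr) :
    ∃ r : Fin (n + 3) → Fin (n + 3) → Bool,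
      IsTournament r ∧ imbalanceSet r = X ∪ Y := by
  classical
  obtain ⟨yp, hypY, xq, hxqX, xr, hxrX, hsum⟩ := h
  have hyp_neg : -yp < 0 := (hY _ hypY).1
  have hyp_pos : 0 < yp := by omega
  have hxq := hX _ hxqX
  have hxr := hX _ hxrX
  have hL0 : 0 ≤ L := hL ▸ Finset.sum_nonneg (fun x hx => (hX x hx).1)
  have hM0 : 0 ≤ M := by
    rw [hM]
    exact Finset.sum_nonneg (fun y hy => by have := (hY y hy).1; show (0:ℤ) ≤ -y; omega)
  have hXc : 1 ≤ (X.card:ℤ) := by exact_mod_cast Finset.card_pos.mpr hXne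
  have hYc : 1 ≤ (Y.card:ℤ) := by exact_mod_cast Finset.card_pos.mpr hYne
  have hxqL : xq ≤ L := by
    rw [hL]; exact Finset.single_le_sum (fun x hx => (hX x hx).1) hxqX
  have hLn : L ≤ (n:ℤ) := by nlinarith
  have hypM : yp ≤ M := by
    rw [hM]
    have := Finset.single_le_sum (f := fun y : ℤ => -y)
      (fun y hy => by have := (hY y hy).1; show (0:ℤ) ≤ -y; omega) hypY
    simpa using this
  have hMn : M ≤ (n:ℤ) := by nlinarith
  have hxqn : xq ≤ (n:ℤ) := le_trans hxqL hLn
  have hypn : yp ≤ (n:ℤ) := le_trans hypM hMn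
  have hcardBV : Fintype.card (BV X Y) = n := card_BV hX hY hL hM hn
  have h2cE : 2 * Fintype.card {z : BV X Y // Even ((z.2:ℕ))} = n := by
    rw [two_cE hX hY, hcardBV]
  have hcO : Fintype.card {z : BV X Y // ¬ Even ((z.2:ℕ))}
      = Fintype.card {z : BV X Y // Even ((z.2:ℕ))} := by
    rw [Fintype.card_subtype_compl, hcardBV]
    omega
  have hxqE : xq % 2 = 0 := Int.even_iff.mp hxq.2
  have hxrE : xr % 2 = 0 := Int.even_iff.mp hxr.2
  set b1 : ℕ := xq.toNat / 2 with hb1d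
  set a2 : ℕ := (n - yp.toNat) / 2 with ha2d
  have hb1 : b1 ≤ Fintype.card {z : BV X Y // Even ((z.2:ℕ))} := by omega
  have ha2 : a2 ≤ Fintype.card {z : BV X Y // ¬ Even ((z.2:ℕ))} := by omega
  have hcardVV : Fintype.card (VV X Y) = n + 3 := by
    rw [Fintype.card_sum, hcardBV]
    simp
  let e : VV X Y ≃ Fin (n+3) := Fintype.equivFinOfCardEq hcardVV
  refine ⟨fun i j => decide (cf X Y b1 a2 (e.symm i) (e.symm j) = 1), ?_, ?_⟩
  · constructor
    · intro i
      simp [cf_diag]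
    · intro i j hij
      have hvw : e.symm i ≠ e.symm j := fun hc => hij (e.symm.injective hc)
      rcases cf_pm b1 a2 _ _ hvw with h1 | h1
      · have h2 : cf X Y b1 a2 (e.symm j) (e.symm i) = -1 := by
          rw [cf_antisymm, h1]
        simp [h1, h2]
      · have h2 : cf X Y b1 a2 (e.symm j) (e.symm i) = 1 := by
          rw [cf_antisymm, h1]; ring
        simp [h1, h2]
  · have hval : ∀ v : VV X Y, ∑ w : VV X Y, cf X Y b1 a2 v w =
        Sum.elim (fun z : BV X Y => if (z.2:ℕ) < ap X Y z.1 then z.1.1.1 else z.1.1.2)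
          (fun s : Fin 3 => if s.val = 0 then xq else if s.val = 1 then xr else -yp) v := by
      intro v
      rcases v with z | s
      · exact rowsum_inl b1 a2 hX hY z
      · rw [rowsum_inr b1 a2 hb1 ha2 s]
        show _ = (if s.val = 0 then xq else if s.val = 1 then xr else -yp)
        split_ifs <;> omega
    have himb : ∀ i, imbalance
        (fun i j => decide (cf X Y b1 a2 (e.symm i) (e.symm j) = 1)) i
        = Sum.elim (fun z : BV X Y => if (z.2:ℕ) < ap X Y z.1 then z.1.1.1 else z.1.1.2)
          (fun s : Fin 3 => if s.val = 0 then xq else if s.val = 1 then xr else -yp)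
          (e.symm i) := by
      intro i
      rw [imbalance_formula (cf X Y b1 a2) (cf_diag b1 a2) (cf_antisymm b1 a2)
        (cf_pm b1 a2) e i, hval]
    unfold imbalanceSet
    ext t
    simp only [Finset.mem_image, Finset.mem_univ, true_and, Finset.mem_union]
    constructor
    · rintro ⟨i, hi⟩
      rw [himb i] at hi
      generalize e.symm i = v at hi
      rcases v with z | s
      · obtain ⟨hx, hy⟩ := Finset.mem_product.mp z.1.2
        by_cases hk : (z.2:ℕ) < ap X Y z.1
        · left
          simp only [Sum.elim_inl, if_pos hk] at hi
          rwa [← hi]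
        · right
          simp only [Sum.elim_inl, if_neg hk] at hi
          rwa [← hi]
      · rcases (by omega : s.val = 0 ∨ s.val = 1 ∨ s.val = 2) with hs|hs|hs
        · left
          simp only [Sum.elim_inr, hs, if_pos rfl] at hi
          rwa [← hi]
        · left
          simp only [Sum.elim_inr, hs] at hi
          norm_num at hi
          rwa [← hi]
        · right
          simp only [Sum.elim_inr, hs] at hi
          norm_num at hi
          rwa [← hi]
    · intro ht
      have hgoal : ∃ v : VV X Y,
          Sum.elim (fun z : BV X Y => if (z.2:ℕ) < ap X Y z.1 then z.1.1.1 else z.1.1.2)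
            (fun s : Fin 3 => if s.val = 0 then xq else if s.val = 1 then xr else -yp) v
            = t := by
        rcases ht with htX | htY
        · obtain ⟨y0, hy0⟩ := hYne
          have hmem : (t, y0) ∈ X ×ˢ Y := Finset.mem_product.mpr ⟨htX, hy0⟩
          have hy0n := (hY _ hy0).1
          have hap : 0 < ap X Y ⟨(t,y0), hmem⟩ := by
            show 0 < (-y0).toNat
            omega
          refine ⟨Sum.inl ⟨⟨(t,y0), hmem⟩, ⟨0, by
            show 0 < (-y0).toNat + t.toNat
            omega⟩⟩, ?_⟩
          simp only [Sum.elim_inl]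
          rw [if_pos (by simpa using hap)]
        · have hpos : 0 < xq ∨ 0 < xr := by omega
          have hxp : ∃ xp ∈ X, 0 < xp := by
            rcases hpos with h' | h'
            · exact ⟨xq, hxqX, h'⟩
            · exact ⟨xr, hxrX, h'⟩
          obtain ⟨xp, hxpX, hxp0⟩ := hxp
          have hmem : (xp, t) ∈ X ×ˢ Y := Finset.mem_product.mpr ⟨hxpX, htY⟩
          have hbp : 0 < bp X Y ⟨(xp,t), hmem⟩ := by
            show 0 < xp.toNat
            omega
          refine ⟨Sum.inl ⟨⟨(xp,t), hmem⟩,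
            ⟨ap X Y ⟨(xp,t), hmem⟩, by
              show ap X Y ⟨(xp,t), hmem⟩ < ap X Y ⟨(xp,t), hmem⟩ + xp.toNat
              omega⟩⟩, ?_⟩
          simp only [Sum.elim_inl]
          rw [if_neg (by simp)]
      obtain ⟨v, hv⟩ := hgoal
      exact ⟨e v, by rw [himb (e v), Equiv.symm_apply_apply]; exact hv⟩
end

section
/- Let X = {x₁, …, x_l} and Y = {−y₁, …, −y_m} be disjoint nonempty sets of even integers, where x₁ > ⋯ > x_l are non-negative even integers and y₁ < ⋯ < y_m are positive even integers, with X ∪ Y ≠ {0}. Let L = x₁ + ⋯ + x_l, M = y₁ + ⋯ + y_m and n = lM + mL. Suppose there exist a p-term sequence of elements of X and a q-term sequence of elements of −Y = {y : −y ∈ Y} having the same sum, with p + q odd, and let k be the minimum value of p + q over all such pairs of sequences. Then k < n. -/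
def Wit (X Y : Finset ℤ) (k' : ℕ) : Prop :=
  Odd k' ∧ ∃ p q : ℕ, p + q = k' ∧ 1 ≤ p ∧ 1 ≤ q ∧
    ∃ (a : Fin p → ℤ) (b : Fin q → ℤ),
      (∀ i, a i ∈ X) ∧ (∀ i, -(b i) ∈ Y) ∧ ∑ i, a i = ∑ i, b i

lemma st16_sum_const_fin (Q : ℕ) (x : ℤ) : ∑ _i : Fin Q, x = (Q : ℤ) * x := by
  simp [mul_comm]

lemma st16_half_pos {x : ℤ} (hx : 0 < x) (he : Even x) : ∃ P : ℕ, 1 ≤ P ∧ x = 2 * P := by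
  obtain ⟨c, hc⟩ := he
  exact ⟨c.toNat, by omega, by omega⟩

lemma st16_wit_const {X Y : Finset ℤ} {x y : ℤ} (hx : x ∈ X) (hy : -y ∈ Y)
    {P Q : ℕ} (hP : 1 ≤ P) (hQ : 1 ≤ Q) (hsum : (Q : ℤ) * x = (P : ℤ) * y)
    (hodd : Odd (Q + P)) : Wit X Y (Q + P) :=
  ⟨hodd, Q, P, rfl, hQ, hP, (fun _ => x), (fun _ => y), fun _ => hx, fun _ => hy, by
    rw [st16_sum_const_fin, st16_sum_const_fin, hsum]⟩

lemma st16_wit_const0 {X Y : Finset ℤ} {x y : ℤ} (hx : x ∈ X) (h0 : (0:ℤ) ∈ X) (hy : -y ∈ Y)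
    {P Q : ℕ} (hP : 1 ≤ P) (hsum : (Q : ℤ) * x = (P : ℤ) * y)
    (hodd : Odd (Q + 1 + P)) : Wit X Y (Q + 1 + P) := by
  refine ⟨hodd, Q+1, P, rfl, by omega, hP, Fin.cons 0 (fun _ => x), (fun _ => y),
    ?_, fun _ => hy, ?_⟩
  · intro i
    induction i using Fin.cases <;> simp [hx, h0]
  · rw [Fin.sum_cons, st16_sum_const_fin, st16_sum_const_fin, hsum]
    ring

lemma st16_odd_sum_parity {r : ℕ} (f : Fin r → ℤ) (hf : ∀ i, f i % 2 = 1) :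
    ((∑ i, f i : ℤ) : ZMod 2) = (r : ZMod 2) := by
  have h1 : ∀ i : Fin r, ((f i : ZMod 2)) = 1 := by
    intro i
    have h := hf i
    have h2 : f i = 2 * (f i / 2) + 1 := by omega
    rw [h2]
    push_cast
    rw [show ((2 : ZMod 2)) = 0 by decide]
    ring
  rw [Int.cast_sum, Finset.sum_congr rfl fun i _ => h1 i]
  simp

lemma st16_key : ∀ N : ℕ, ∀ X Y : Finset ℤ,
    (∀ x ∈ X, 0 ≤ x ∧ Even x) → (∀ y ∈ Y, y < 0 ∧ Even y) → Y.Nonempty →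
    (∑ y ∈ Y, -y).toNat ≤ N → (∃ k0, Wit X Y k0) →
    ∃ k', Wit X Y k' ∧
      (k' : ℤ) < X.card * (∑ y ∈ Y, -y) + Y.card * (∑ x ∈ X, x) := by
  intro N
  induction N using Nat.strong_induction_on with
  | _ N ih =>
  intro X Y hX hY hYne hMN hex
  set M : ℤ := ∑ y ∈ Y, -y with hMdef
  set L : ℤ := ∑ x ∈ X, x with hLdef
  have hy2 : ∀ u ∈ Y, 2 ≤ -u := by
    intro u hu
    have h1 := (hY u hu).1
    have h2 := Int.even_iff.mp (hY u hu).2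
    omega
  obtain ⟨u₀, hu₀⟩ := hYne
  have hyM : ∀ u ∈ Y, -u ≤ M := by
    intro u hu
    exact Finset.single_le_sum (f := fun y => -y)
      (fun y hy => by show (0:ℤ) ≤ -y; have := hy2 y hy; omega) hu
  have hM2 : 2 ≤ M := le_trans (hy2 u₀ hu₀) (hyM u₀ hu₀)
  obtain ⟨k0, hk0odd, p, q, hpq, hp, hq, a, b, ha, hbm, hab⟩ := hex
  have hbpos : ∀ i, 0 < b i := by
    intro i
    have := (hY _ (hbm i)).1
    omega
  have hsb : 0 < ∑ i, b i :=
    Finset.sum_pos (fun i _ => hbpos i) ⟨⟨0, hq⟩, Finset.mem_univ _⟩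
  have hsa : 0 < ∑ i, a i := hab ▸ hsb
  have hax : ∃ i, 0 < a i := by
    by_contra h
    push_neg at h
    have := Finset.sum_nonpos (fun i (_ : i ∈ Finset.univ) => h i)
    omega
  obtain ⟨i₀, hi₀⟩ := hax
  have hx₀mem : a i₀ ∈ X := ha i₀
  have hx₀even : Even (a i₀) := (hX _ hx₀mem).2
  have hx₀2 : 2 ≤ a i₀ := by
    have := Int.even_iff.mp hx₀even
    omega
  have hxL : ∀ x ∈ X, x ≤ L := by
    intro x hx
    exact Finset.single_le_sum (f := fun x => x) (fun z hz => (hX z hz).1) hx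
  have hL2 : 2 ≤ L := le_trans hx₀2 (hxL _ hx₀mem)
  have hl1 : 1 ≤ (X.card : ℤ) := by
    exact_mod_cast Finset.card_pos.mpr ⟨a i₀, hx₀mem⟩
  have hm1 : 1 ≤ (Y.card : ℤ) := by
    exact_mod_cast Finset.card_pos.mpr ⟨u₀, hu₀⟩
  have hLMn : L + M ≤ (X.card : ℤ) * M + (Y.card : ℤ) * L := by
    nlinarith [mul_nonneg (by linarith : (0:ℤ) ≤ (X.card:ℤ) - 1) (by linarith : (0:ℤ) ≤ M),
      mul_nonneg (by linarith : (0:ℤ) ≤ (Y.card:ℤ) - 1) (by linarith : (0:ℤ) ≤ L)]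
  by_cases h0 : (0:ℤ) ∈ X
  · -- Case 1 : 0 ∈ X, use x₀ and y₀ = -u₀, fix parity with a zero
    obtain ⟨P, hP1, hPx⟩ := st16_half_pos (by omega) hx₀even
    obtain ⟨Q, hQ1, hQy⟩ := st16_half_pos (x := -u₀) (by have := hy2 u₀ hu₀; omega)
      ((hY u₀ hu₀).2.neg)
    have hy₀mem : -(-u₀) ∈ Y := by simpa using hu₀
    have hsum : (Q : ℤ) * a i₀ = (P : ℤ) * (-u₀) := by rw [hPx, hQy]; ring
    have hPL : 2 * (P : ℤ) ≤ L := by rw [← hPx]; exact hxL _ hx₀mem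
    have hQM : 2 * (Q : ℤ) ≤ M := by rw [← hQy]; exact hyM u₀ hu₀
    rcases Nat.even_or_odd (Q + P) with hev | hod
    · refine ⟨Q + 1 + P, st16_wit_const0 hx₀mem h0 hy₀mem hP1 hsum ?_, ?_⟩
      · rw [Nat.odd_iff]; rw [Nat.even_iff] at hev; omega
      · push_cast
        linarith
    · refine ⟨Q + P, st16_wit_const hx₀mem hy₀mem hP1 hQ1 hsum hod, ?_⟩
      push_cast
      linarith
  · by_cases h2 : ∃ x ∈ X, ∃ u ∈ Y, ¬ ((4:ℤ) ∣ x - u)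
    · -- Case 2 : mismatched residues give an odd witness directly
      obtain ⟨x, hxm, u, hum, h4⟩ := h2
      have hxpos : 0 < x := by
        have h1 := (hX x hxm).1
        have hne : x ≠ 0 := fun h => h0 (h ▸ hxm)
        omega
      obtain ⟨P, hP1, hPx⟩ := st16_half_pos hxpos (hX x hxm).2
      obtain ⟨Q, hQ1, hQy⟩ := st16_half_pos (x := -u) (by have := hy2 u hum; omega)
        ((hY u hum).2.neg)
      have humem : -(-u) ∈ Y := by simpa using hum
      have hsum : (Q : ℤ) * x = (P : ℤ) * (-u) := by rw [hPx, hQy]; ring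
      have hod : Odd (Q + P) := by
        rw [Nat.odd_iff]
        omega
      refine ⟨Q + P, st16_wit_const hxm humem hP1 hQ1 hsum hod, ?_⟩
      have hPL : 2 * (P : ℤ) ≤ L := by rw [← hPx]; exact hxL _ hxm
      have hQM : 2 * (Q : ℤ) ≤ M := by rw [← hQy]; exact hyM u hum
      push_cast
      linarith
    · push_neg at h2
      by_cases h4 : (4:ℤ) ∣ a i₀
      · -- Case 3b : everything divisible by 4, halve and recurse
        have hX4 : ∀ x ∈ X, (4:ℤ) ∣ x := by
          intro x hx
          have e1 := h2 x hx u₀ hu₀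
          have e2 := h2 (a i₀) hx₀mem u₀ hu₀
          omega
        have hY4 : ∀ u ∈ Y, (4:ℤ) ∣ u := by
          intro u hu
          have e1 := h2 (a i₀) hx₀mem u hu
          omega
        set X' := X.image (· / 2) with hX'def
        set Y' := Y.image (· / 2) with hY'def
        have hinjX : ∀ x ∈ X, ∀ y ∈ X, x / 2 = y / 2 → x = y := by
          intro x hx y hy h
          have := hX4 x hx
          have := hX4 y hy
          omega
        have hinjY : ∀ x ∈ Y, ∀ y ∈ Y, x / 2 = y / 2 → x = y := by
          intro x hx y hy h
          have := hY4 x hx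
          have := hY4 y hy
          omega
        have hcardX : X'.card = X.card :=
          Finset.card_image_of_injOn (fun x hx y hy h => hinjX x hx y hy h)
        have hcardY : Y'.card = Y.card :=
          Finset.card_image_of_injOn (fun x hx y hy h => hinjY x hx y hy h)
        have hL' : 2 * (∑ x ∈ X', x) = L := by
          rw [hX'def, Finset.sum_image hinjX, Finset.mul_sum, hLdef]
          refine Finset.sum_congr rfl fun x hx => ?_
          have := hX4 x hx
          omega
        have hM' : 2 * (∑ y ∈ Y', -y) = M := by
          rw [hY'def, Finset.sum_image hinjY, Finset.mul_sum, hMdef]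
          refine Finset.sum_congr rfl fun y hy => ?_
          have := hY4 y hy
          omega
        have hX'h : ∀ x ∈ X', 0 ≤ x ∧ Even x := by
          intro x' hx'
          obtain ⟨x, hx, rfl⟩ := Finset.mem_image.mp hx'
          have h1 := (hX x hx).1
          have h4x := hX4 x hx
          exact ⟨by omega, by rw [Int.even_iff]; omega⟩
        have hY'h : ∀ y ∈ Y', y < 0 ∧ Even y := by
          intro y' hy'
          obtain ⟨y, hy, rfl⟩ := Finset.mem_image.mp hy'
          have h1 := (hY y hy).1
          have h4y := hY4 y hy
          exact ⟨by omega, by rw [Int.even_iff]; omega⟩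
        have hY'ne : Y'.Nonempty := ⟨u₀ / 2, Finset.mem_image_of_mem _ hu₀⟩
        have hmeas : (∑ y ∈ Y', -y).toNat < N := by
          have h1 : 2 * (∑ y ∈ Y', -y) = M := hM'
          omega
        have hwit' : ∃ k0', Wit X' Y' k0' := by
          refine ⟨k0, hk0odd, p, q, hpq, hp, hq, (fun i => a i / 2), (fun i => b i / 2),
            ?_, ?_, ?_⟩
          · intro i
            exact Finset.mem_image_of_mem _ (ha i)
          · intro i
            refine Finset.mem_image.mpr ⟨-(b i), hbm i, ?_⟩
            show -b i / 2 = -(b i / 2)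
            have := hY4 _ (hbm i)
            omega
          · have h2a : 2 * ∑ i, (a i / 2) = 2 * ∑ i, (b i / 2) := by
              rw [Finset.mul_sum, Finset.mul_sum,
                Finset.sum_congr rfl (fun i _ =>
                  (by have := hX4 _ (ha i); omega : 2 * (a i / 2) = a i)),
                Finset.sum_congr rfl (fun i _ =>
                  (by have := hY4 _ (hbm i); omega : 2 * (b i / 2) = b i))]
              exact hab
            have : ∑ i, (a i / 2) = ∑ i, (b i / 2) := by omega
            exact this
        obtain ⟨k', hwitk', hbound'⟩ := ih _ hmeas X' Y' hX'h hY'h hY'ne le_rfl hwit'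
        obtain ⟨hodd', p', q', hpq', hp', hq', c, d, hc, hd, hcd⟩ := hwitk'
        refine ⟨k', ⟨hodd', p', q', hpq', hp', hq',
          (fun i => 2 * c i), (fun i => 2 * d i), ?_, ?_, ?_⟩, ?_⟩
        · intro i
          obtain ⟨x, hx, hx2⟩ := Finset.mem_image.mp (hc i)
          have hxx : 2 * c i = x := by have := hX4 x hx; omega
          show 2 * c i ∈ X
          rw [hxx]; exact hx
        · intro i
          obtain ⟨u, hu, hu2⟩ := Finset.mem_image.mp (hd i)
          have huu : -(2 * d i) = u := by have := hY4 u hu; omega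
          show -(2 * d i) ∈ Y
          rw [huu]; exact hu
        · show ∑ i, 2 * c i = ∑ i, 2 * d i
          rw [← Finset.mul_sum, ← Finset.mul_sum, hcd]
        · have e1 : (X'.card : ℤ) = X.card := by exact_mod_cast hcardX
          have e2 : (Y'.card : ℤ) = Y.card := by exact_mod_cast hcardY
          rw [e1, e2] at hbound'
          have hk'0 : (0:ℤ) ≤ k' := Int.natCast_nonneg k'
          have hRHS : (X.card : ℤ) * M + (Y.card : ℤ) * L
              = 2 * ((X.card : ℤ) * (∑ y ∈ Y', -y) + (Y.card : ℤ) * (∑ x ∈ X', x)) := by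
            rw [← hM', ← hL']; ring
          linarith
      · -- Case 3a : everything ≡ 2 mod 4, contradiction with odd witness
        exfalso
        have hX2 : ∀ x ∈ X, ¬ (4:ℤ) ∣ x := by
          intro x hx hdvd
          have e1 := h2 x hx u₀ hu₀
          have e2 := h2 (a i₀) hx₀mem u₀ hu₀
          omega
        have hY2 : ∀ u ∈ Y, ¬ (4:ℤ) ∣ u := by
          intro u hu hdvd
          have e1 := h2 (a i₀) hx₀mem u hu
          have e2 := hX2 _ hx₀mem
          omega
        have hAmod : ∀ i, (a i / 2) % 2 = 1 := by
          intro i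
          have he := Int.even_iff.mp (hX _ (ha i)).2
          have hn4 := hX2 _ (ha i)
          omega
        have hBmod : ∀ i, (b i / 2) % 2 = 1 := by
          intro i
          have he := Int.even_iff.mp (hY _ (hbm i)).2
          have hn4 := hY2 _ (hbm i)
          omega
        have hhalf : ∑ i, (a i / 2) = ∑ i, (b i / 2) := by
          have h2a : 2 * ∑ i, (a i / 2) = ∑ i, a i := by
            rw [Finset.mul_sum]
            exact Finset.sum_congr rfl fun i _ => by
              have := Int.even_iff.mp (hX _ (ha i)).2; omega
          have h2b : 2 * ∑ i, (b i / 2) = ∑ i, b i := by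
            rw [Finset.mul_sum]
            exact Finset.sum_congr rfl fun i _ => by
              have := Int.even_iff.mp (hY _ (hbm i)).2; omega
          omega
        have hpz := st16_odd_sum_parity _ hAmod
        have hqz := st16_odd_sum_parity _ hBmod
        rw [hhalf, hqz] at hpz
        have hmod : q % 2 = p % 2 := (ZMod.natCast_eq_natCast_iff q p 2).mp hpz
        have hko := Nat.odd_iff.mp (hpq ▸ hk0odd)
        omega

/-- If `k` is the minimum odd value of `p + q` such that there are
a `p`-term sequence from `X` and a `q`-term sequence from `−Y` with equal sums,
then `k < n`. -/
theorem min_equal_sum_length_lt (X Y : Finset ℤ)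
    (hXne : X.Nonempty) (hYne : Y.Nonempty) (hdisj : Disjoint X Y)
    (hX : ∀ x ∈ X, 0 ≤ x ∧ Even x) (hY : ∀ y ∈ Y, y < 0 ∧ Even y)
    (hXY : X ∪ Y ≠ {0})
    (L M : ℤ) (hL : L = ∑ x ∈ X, x) (hM : M = ∑ y ∈ Y, -y)
    (n : ℕ) (hn : (n : ℤ) = X.card * M + Y.card * L)
    (k : ℕ)
    (hk : IsLeast {k' : ℕ | Odd k' ∧ ∃ p q : ℕ, p + q = k' ∧ 1 ≤ p ∧ 1 ≤ q ∧
      ∃ (a : Fin p → ℤ) (b : Fin q → ℤ),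
        (∀ i, a i ∈ X) ∧ (∀ i, -(b i) ∈ Y) ∧ ∑ i, a i = ∑ i, b i} k) :
    k < n := by
  obtain ⟨hmem, hlb⟩ := hk
  have hwit : Wit X Y k := hmem
  obtain ⟨k', hwit', hb'⟩ :=
    st16_key (∑ y ∈ Y, -y).toNat X Y hX hY hYne le_rfl ⟨k, hwit⟩
  have hkk' : k ≤ k' := hlb hwit'
  have h1 : (k' : ℤ) < (n : ℤ) := by
    rw [hn, hM, hL]
    exact hb'
  have h2 : k' < n := by exact_mod_cast h1
  omega
end

section
/- Let X = {x₁, …, x_l} and Y = {−y₁, …, −y_m} be disjoint nonempty sets of odd integers, where x₁ > ⋯ > x_l are positive odd integers and y₁ < ⋯ < y_m are positive odd integers. Let L = x₁ + ⋯ + x_l, M = y₁ + ⋯ + y_m and n = lM + mL. Then the minimal order of a tournament whose imbalance set is X ∪ Y is at most n. -/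
namespace OddT
open Finset


/-- Regular tournament relation on `{0,...,k-1}` (for odd `k`). -/
def reg (k a b : ℕ) : Bool :=
  decide (1 ≤ (b + k - a) % k ∧ (b + k - a) % k ≤ (k - 1) / 2)

lemma reg_self (k a : ℕ) : reg k a a = false := by
  have h : a + k - a = k := by omega
  simp [reg, h, Nat.mod_self]

lemma d_add (k a b : ℕ) (ha : a < k) (hb : b < k) (hne : a ≠ b) :
    (b + k - a) % k + (a + k - b) % k = k := by
  rcases Nat.lt_or_ge a b with h | h
  · have h1 : b + k - a = (b - a) + k := by omega
    rw [h1, Nat.add_mod_right, Nat.mod_eq_of_lt (by omega), Nat.mod_eq_of_lt (by omega)]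
    omega
  · have hba : b < a := by omega
    have h1 : a + k - b = (a - b) + k := by omega
    rw [h1, Nat.add_mod_right, Nat.mod_eq_of_lt (by omega), Nat.mod_eq_of_lt (by omega)]
    omega

lemma reg_antisymm (k a b : ℕ) (hk : k % 2 = 1) (ha : a < k) (hb : b < k) (hne : a ≠ b) :
    reg k b a = !reg k a b := by
  have hd := d_add k a b ha hb hne
  have hd1 : (b + k - a) % k < k := Nat.mod_lt _ (by omega)
  have hd2 : (a + k - b) % k < k := Nat.mod_lt _ (by omega)
  cases h : reg k a b
  · simp only [reg, decide_eq_false_iff_not] at h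
    simp only [reg, Bool.not_false, decide_eq_true_eq]
    omega
  · simp only [reg, decide_eq_true_eq] at h
    simp only [reg, Bool.not_true, decide_eq_false_iff_not]
    omega

lemma reg_out (k a : ℕ) (hk : 0 < k) (ha : a < k) :
    ∑ b ∈ range k, (if reg k a b then (1:ℤ) else 0) = ((k - 1) / 2 : ℕ) := by
  rw [Finset.sum_nbij' (t := range k)
      (g := fun d => if 1 ≤ d ∧ d ≤ (k - 1) / 2 then (1:ℤ) else 0)
      (fun b => (b + k - a) % k) (fun d => (a + d) % k)
      (fun b _ => mem_range.mpr (Nat.mod_lt _ hk))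
      (fun d _ => mem_range.mpr (Nat.mod_lt _ hk))
      ?_ ?_ ?_]
  · rw [← Finset.sum_filter]
    have hfil : (range k).filter (fun d => 1 ≤ d ∧ d ≤ (k - 1) / 2) = Finset.Icc 1 ((k - 1) / 2) := by
      ext d
      simp only [mem_filter, mem_range, mem_Icc]
      omega
    rw [hfil, Finset.sum_const, Nat.card_Icc]
    simp
  · intro b hb
    rw [mem_range] at hb
    show (a + (b + k - a) % k) % k = b
    rw [Nat.add_mod_mod, show a + (b + k - a) = b + k by omega, Nat.add_mod_right,
      Nat.mod_eq_of_lt hb]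
  · intro d hd
    rw [mem_range] at hd
    show ((a + d) % k + k - a) % k = d
    rw [show (a + d) % k + k - a = (a + d) % k + (k - a) by omega, Nat.mod_add_mod,
      show a + d + (k - a) = d + k by omega, Nat.add_mod_right, Nat.mod_eq_of_lt hd]
  · intro b _
    simp [reg]

lemma reg_sum (k a : ℕ) (hk : k % 2 = 1) (ha : a < k) :
    ∑ b ∈ range k,
      ((if reg k a b then (1:ℤ) else 0) - (if reg k b a then (1:ℤ) else 0)) = 0 := by
  have h1 := reg_out k a (by omega) ha
  have key : ∀ b ∈ range k, (if reg k b a then (1:ℤ) else 0)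
      = 1 - (if reg k a b then (1:ℤ) else 0) - (if b = a then (1:ℤ) else 0) := by
    intro b hb
    rw [mem_range] at hb
    by_cases hba : b = a
    · subst hba; rw [reg_self]; simp
    · rw [reg_antisymm k a b hk ha hb (fun h => hba h.symm)]
      cases reg k a b <;> simp [hba]
  rw [Finset.sum_sub_distrib, h1, Finset.sum_congr rfl key]
  rw [Finset.sum_sub_distrib, Finset.sum_sub_distrib, h1, Finset.sum_const,
    Finset.sum_ite_eq' (range k) a (fun _ => (1:ℤ))]
  rw [if_pos (mem_range.mpr ha), card_range, nsmul_eq_mul, mul_one]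
  omega

lemma alt_sum (t i : ℕ) :
    ∑ j ∈ range (2 * t), (if (i + j) % 2 = 0 then (1:ℤ) else -1) = 0 := by
  induction t with
  | zero => simp
  | succ t ih =>
    rw [show 2 * (t + 1) = (2 * t) + 1 + 1 by ring, Finset.sum_range_succ,
      Finset.sum_range_succ, ih]
    rcases Nat.mod_two_eq_zero_or_one (i + 2 * t) with h | h
    · have h1 : (i + 2 * t) % 2 = 0 := by omega
      have h2 : (i + (2 * t + 1)) % 2 = 1 := by omega
      rw [h1, h2]; norm_num
    · have h1 : (i + 2 * t) % 2 = 1 := by omega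
      have h2 : (i + (2 * t + 1)) % 2 = 0 := by omega
      rw [h1, h2]; norm_num

lemma sum_range_add (g : ℕ → ℤ) (a b : ℕ) :
    ∑ j ∈ range (a + b), g j = ∑ j ∈ range a, g j + ∑ j ∈ range b, g (a + j) := by
  induction b with
  | zero => simp
  | succ b ih =>
    rw [show a + (b + 1) = (a + b) + 1 by ring, Finset.sum_range_succ, ih,
      Finset.sum_range_succ]
    ring

/-- Relation within a block: first `y'` vertices form a regular tournament and
beat the last `x'` vertices, which also form a regular tournament. -/
def innb (x' y' i j : ℕ) : Bool :=
  if i < y' ∧ j < y' then reg y' i j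
  else if i < y' then true
  else if j < y' then false
  else reg x' (i - y') (j - y')

lemma innb_self (x' y' i : ℕ) : innb x' y' i i = false := by
  by_cases h : i < y' <;> simp [innb, h, reg_self]

lemma innb_antisymm (x' y' i j : ℕ) (hx : x' % 2 = 1) (hy : y' % 2 = 1)
    (hi : i < y' + x') (hj : j < y' + x') (hne : i ≠ j) :
    innb x' y' j i = !innb x' y' i j := by
  by_cases h1 : i < y' <;> by_cases h2 : j < y'
  · simp only [innb, if_pos (And.intro h1 h2), if_pos (And.intro h2 h1)]
    exact reg_antisymm y' i j hy h1 h2 hne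
  · simp [innb, h1, h2]
  · simp [innb, h1, h2]
  · simp only [innb, if_neg (by omega : ¬(i < y' ∧ j < y')),
      if_neg (by omega : ¬(j < y' ∧ i < y')), if_neg h1, if_neg h2]
    exact reg_antisymm x' (i - y') (j - y') hx (by omega) (by omega) (by omega)

lemma innb_sum (x' y' i : ℕ) (hx : x' % 2 = 1) (hy : y' % 2 = 1) (hi : i < y' + x') :
    ∑ j ∈ range (y' + x'),
      ((if innb x' y' i j then (1:ℤ) else 0) - (if innb x' y' j i then (1:ℤ) else 0))
      = if i < y' then (x' : ℤ) else -(y' : ℤ) := by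
  rw [sum_range_add]
  by_cases h : i < y'
  · rw [if_pos h]
    have e1 : ∑ j ∈ range y',
        ((if innb x' y' i j then (1:ℤ) else 0) - (if innb x' y' j i then (1:ℤ) else 0))
        = ∑ j ∈ range y',
        ((if reg y' i j then (1:ℤ) else 0) - (if reg y' j i then (1:ℤ) else 0)) := by
      refine Finset.sum_congr rfl fun j hj => ?_
      rw [mem_range] at hj
      simp [innb, h, hj]
    rw [e1, reg_sum y' i hy h]
    have e2 : ∑ j ∈ range x',
        ((if innb x' y' i (y' + j) then (1:ℤ) else 0)
          - (if innb x' y' (y' + j) i then (1:ℤ) else 0))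
        = ∑ j ∈ range x', (1:ℤ) := by
      refine Finset.sum_congr rfl fun j hj => ?_
      have hA : innb x' y' i (y' + j) = true := by
        simp [innb, h, show ¬ (y' + j < y') by omega]
      have hB : innb x' y' (y' + j) i = false := by
        simp [innb, h, show ¬ (y' + j < y') by omega]
      rw [hA, hB]; norm_num
    rw [e2, Finset.sum_const, card_range]
    simp
  · rw [if_neg h]
    have e1 : ∑ j ∈ range y',
        ((if innb x' y' i j then (1:ℤ) else 0) - (if innb x' y' j i then (1:ℤ) else 0))
        = ∑ j ∈ range y', (-1:ℤ) := by
      refine Finset.sum_congr rfl fun j hj => ?_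
      rw [mem_range] at hj
      have hA : innb x' y' i j = false := by simp [innb, h, hj]
      have hB : innb x' y' j i = true := by simp [innb, h, hj]
      rw [hA, hB]; norm_num
    have e2 : ∑ j ∈ range x',
        ((if innb x' y' i (y' + j) then (1:ℤ) else 0)
          - (if innb x' y' (y' + j) i then (1:ℤ) else 0))
        = ∑ j ∈ range x',
        ((if reg x' (i - y') j then (1:ℤ) else 0) - (if reg x' j (i - y') then (1:ℤ) else 0)) := by
      refine Finset.sum_congr rfl fun j hj => ?_
      have hA : innb x' y' i (y' + j) = reg x' (i - y') j := by
        simp [innb, h, show ¬ (y' + j < y') by omega, Nat.add_sub_cancel_left]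
      have hB : innb x' y' (y' + j) i = reg x' j (i - y') := by
        simp [innb, h, show ¬ (y' + j < y') by omega, Nat.add_sub_cancel_left]
      rw [hA, hB]
    rw [e1, e2, reg_sum x' (i - y') hx (by omega), Finset.sum_const, card_range]
    simp

/-- Linear order used to orient cross-block arcs. -/
def blt (b c : ℤ × ℤ) : Bool := decide (b.1 < c.1 ∨ (b.1 = c.1 ∧ b.2 < c.2))

lemma blt_total (b c : ℤ × ℤ) (h : b ≠ c) : blt c b = !blt b c := by
  have h' : b.1 ≠ c.1 ∨ b.2 ≠ c.2 := by
    by_contra hc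
    push_neg at hc
    exact h (Prod.ext hc.1 hc.2)
  cases hbc : blt b c
  · simp only [blt, decide_eq_false_iff_not] at hbc
    simp only [blt, Bool.not_false, decide_eq_true_eq]
    omega
  · simp only [blt, decide_eq_true_eq] at hbc
    simp only [blt, Bool.not_true, decide_eq_false_iff_not]
    omega

def par (i j : ℕ) : Bool := decide ((i + j) % 2 = 0)

/-- Size of the block indexed by `(x, y)`. -/
def sz (p : ℤ × ℤ) : ℕ := (p.1 - p.2).toNat

/-- Vertex type: one block of size `x + |y|` for each pair `(x,y) ∈ X ×ˢ Y`. -/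
abbrev V (X Y : Finset ℤ) : Type := Σ b : ↥(X ×ˢ Y), Fin (sz b.1)

/-- The tournament relation on `V X Y`. -/
def R (X Y : Finset ℤ) : V X Y → V X Y → Bool := fun u v =>
  if u.1 = v.1 then innb (u.1.1.1.toNat) ((-u.1.1.2).toNat) u.2.val v.2.val
  else if blt u.1.1 v.1.1 then par u.2.val v.2.val else !par u.2.val v.2.val

section Props

variable {X Y : Finset ℤ} (hX : ∀ x ∈ X, 0 < x ∧ Odd x) (hY : ∀ y ∈ Y, y < 0 ∧ Odd y)

include hX hY in
lemma blk_facts (b : ↥(X ×ˢ Y)) :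
    (b.1.1.toNat) % 2 = 1 ∧ ((-b.1.2).toNat) % 2 = 1 ∧
    sz b.1 = ((-b.1.2).toNat) + (b.1.1.toNat) ∧
    ((b.1.1.toNat : ℤ)) = b.1.1 ∧ (-((-b.1.2).toNat : ℤ)) = b.1.2 := by
  have hb := b.2
  rw [mem_product] at hb
  obtain ⟨hx1, hx2⟩ := hX _ hb.1
  obtain ⟨hy1, hy2⟩ := hY _ hb.2
  obtain ⟨s, hs⟩ := hx2
  obtain ⟨t, ht⟩ := hy2
  unfold sz
  omega

include hX hY in
lemma R_irrefl (v : V X Y) : R X Y v v = false := by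
  simp [R, innb_self]

include hX hY in
lemma R_antisymm (u v : V X Y) (h : u ≠ v) : R X Y u v = !(R X Y v u) := by
  obtain ⟨b, i⟩ := u
  obtain ⟨c, j⟩ := v
  by_cases hbc : b = c
  · subst hbc
    have hij : i ≠ j := by
      intro hij; exact h (by rw [hij])
    obtain ⟨h1, h2, h3, _, _⟩ := blk_facts hX hY b
    simp only [R, if_pos rfl]
    have := innb_antisymm (b.1.1.toNat) ((-b.1.2).toNat) i.val j.val h1 h2
      (h3 ▸ i.isLt) (h3 ▸ j.isLt) (fun hh => hij (Fin.ext hh))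
    rw [this]
    simp
  · have hbc1 : b.1 ≠ c.1 := fun hh => hbc (Subtype.ext hh)
    simp only [R, if_neg hbc, if_neg (fun hh : c = b => hbc hh.symm)]
    rw [blt_total b.1 c.1 hbc1]
    have hpar : par j.val i.val = par i.val j.val := by
      simp [par, Nat.add_comm]
    rw [hpar]
    cases blt b.1 c.1 <;> simp

include hX hY in
lemma imbV (v : V X Y) :
    ∑ u : V X Y, ((if R X Y v u then (1:ℤ) else 0) - (if R X Y u v then (1:ℤ) else 0))
      = if v.2.val < ((-v.1.1.2).toNat) then v.1.1.1 else v.1.1.2 := by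
  obtain ⟨b, i⟩ := v
  obtain ⟨h1, h2, h3, h4, h5⟩ := blk_facts hX hY b
  rw [show (Finset.univ : Finset (V X Y)) = Finset.univ.sigma (fun _ => Finset.univ) from
    (Finset.univ_sigma_univ).symm, Finset.sum_sigma]
  rw [← Finset.sum_erase_add _ _ (mem_univ b)]
  have hzero : ∀ c ∈ (Finset.univ : Finset ↥(X ×ˢ Y)).erase b,
      ∑ j : Fin (sz c.1),
        ((if R X Y ⟨b, i⟩ ⟨c, j⟩ then (1:ℤ) else 0) - (if R X Y ⟨c, j⟩ ⟨b, i⟩ then (1:ℤ) else 0))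
        = 0 := by
    intro c hc
    have hcb : c ≠ b := (Finset.mem_erase.mp hc).1
    have hbc : b ≠ c := fun hh => hcb hh.symm
    have hbc1 : b.1 ≠ c.1 := fun hh => hbc (Subtype.ext hh)
    obtain ⟨hc1, hc2, hc3, _, _⟩ := blk_facts hX hY c
    obtain ⟨t, ht⟩ : ∃ t, sz c.1 = 2 * t := ⟨sz c.1 / 2, by omega⟩
    have hterm : ∀ j : Fin (sz c.1),
        ((if R X Y ⟨b, i⟩ ⟨c, j⟩ then (1:ℤ) else 0) - (if R X Y ⟨c, j⟩ ⟨b, i⟩ then (1:ℤ) else 0))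
        = (if blt b.1 c.1 then (1:ℤ) else -1) *
            (if (i.val + j.val) % 2 = 0 then (1:ℤ) else -1) := by
      intro j
      simp only [R, if_neg hbc, if_neg hcb, if_neg hbc1, if_neg (fun hh : c.1 = b.1 => hbc1 hh.symm)]
      rw [blt_total b.1 c.1 hbc1]
      have hpar : par j.val i.val = par i.val j.val := by simp [par, Nat.add_comm]
      rw [hpar]
      cases hb : blt b.1 c.1 <;> cases hp : par i.val j.val <;>
        simp only [par, decide_eq_true_eq, decide_eq_false_iff_not] at hp <;>
        simp [hp, if_neg]
    rw [Finset.sum_congr rfl (fun j _ => hterm j), ← Finset.mul_sum]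
    rw [Fin.sum_univ_eq_sum_range
      (fun j => (if (i.val + j) % 2 = 0 then (1:ℤ) else -1)) (sz c.1), ht, alt_sum]
    ring
  rw [Finset.sum_congr rfl hzero, Finset.sum_const, smul_zero, zero_add]
  have hdiag : ∀ j : Fin (sz b.1),
      ((if R X Y ⟨b, i⟩ ⟨b, j⟩ then (1:ℤ) else 0) - (if R X Y ⟨b, j⟩ ⟨b, i⟩ then (1:ℤ) else 0))
      = ((if innb (b.1.1.toNat) ((-b.1.2).toNat) i.val j.val then (1:ℤ) else 0)
        - (if innb (b.1.1.toNat) ((-b.1.2).toNat) j.val i.val then (1:ℤ) else 0)) := by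
    intro j
    simp [R]
  rw [Finset.sum_congr rfl (fun j _ => hdiag j)]
  rw [Fin.sum_univ_eq_sum_range (fun j =>
    ((if innb (b.1.1.toNat) ((-b.1.2).toNat) i.val j then (1:ℤ) else 0)
      - (if innb (b.1.1.toNat) ((-b.1.2).toNat) j i.val then (1:ℤ) else 0))) (sz b.1),
    show range (sz b.1) = range (((-b.1.2).toNat) + (b.1.1.toNat)) from by rw [h3]]
  rw [innb_sum _ _ _ h1 h2 (h3 ▸ i.isLt)]
  by_cases hi : i.val < (-b.1.2).toNat
  · rw [if_pos hi, if_pos hi, h4]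
  · rw [if_neg hi, if_neg hi, h5]

include hX hY in
lemma cardV (L M : ℤ) (hL : L = ∑ x ∈ X, x) (hM : M = ∑ y ∈ Y, -y)
    (n : ℕ) (hn : (n : ℤ) = X.card * M + Y.card * L) :
    Fintype.card (V X Y) = n := by
  have h1 : Fintype.card (V X Y) = ∑ b : ↥(X ×ˢ Y), sz b.1 := by
    rw [Fintype.card_sigma]
    simp
  rw [h1, Finset.sum_coe_sort (X ×ˢ Y) sz]
  have h2 : ((∑ p ∈ X ×ˢ Y, sz p : ℕ) : ℤ) = (n : ℤ) := by
    push_cast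
    have h3 : ∀ p ∈ X ×ˢ Y, ((sz p : ℕ) : ℤ) = p.1 - p.2 := by
      intro p hp
      rw [mem_product] at hp
      have := (hX _ hp.1).1
      have := (hY _ hp.2).1
      unfold sz
      omega
    rw [Finset.sum_congr rfl h3, Finset.sum_product]
    have h4 : ∀ x ∈ X, ∑ y ∈ Y, (x - y) = Y.card * x + M := by
      intro x hx
      rw [Finset.sum_sub_distrib, Finset.sum_const, hM, nsmul_eq_mul]
      rw [Finset.sum_neg_distrib]
      ring
    rw [Finset.sum_congr rfl h4, Finset.sum_add_distrib, Finset.sum_const, ← Finset.mul_sum,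
      ← hL, hn, nsmul_eq_mul]
    ring
  exact_mod_cast h2


end Props

end OddT

open OddT Finset in
/-- In the odd case, the minimal order of a tournament with
imbalance set `X ∪ Y` is at most `n = l*M + m*L`. -/
theorem odd_min_order_le (X Y : Finset ℤ)
    (hXne : X.Nonempty) (hYne : Y.Nonempty) (hdisj : Disjoint X Y)
    (hX : ∀ x ∈ X, 0 < x ∧ Odd x) (hY : ∀ y ∈ Y, y < 0 ∧ Odd y)
    (L M : ℤ) (hL : L = ∑ x ∈ X, x) (hM : M = ∑ y ∈ Y, -y)
    (n : ℕ) (hn : (n : ℤ) = X.card * M + Y.card * L) :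
    sInf {k : ℕ | ∃ r : Fin k → Fin k → Bool,
      IsTournament r ∧ imbalanceSet r = X ∪ Y} ≤ n := by
  apply Nat.sInf_le
  have hcard := cardV hX hY L M hL hM n hn
  let e : V X Y ≃ Fin n := Fintype.equivFinOfCardEq hcard
  refine ⟨fun i j => R X Y (e.symm i) (e.symm j), ⟨fun i => R_irrefl hX hY _, ?_⟩, ?_⟩
  · intro i j hij
    exact R_antisymm hX hY _ _ (fun h => hij (by simpa using congrArg e h))
  · -- imbalance computation
    have himb : ∀ i : Fin n, imbalance (fun i j => R X Y (e.symm i) (e.symm j)) i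
        = if (e.symm i).2.val < ((-(e.symm i).1.1.2).toNat)
            then (e.symm i).1.1.1 else (e.symm i).1.1.2 := by
      intro i
      rw [← imbV hX hY (e.symm i)]
      unfold imbalance outdeg indeg
      rw [Finset.card_filter, Finset.card_filter]
      push_cast
      rw [← Finset.sum_sub_distrib]
      exact Equiv.sum_comp e.symm (fun u =>
        ((if R X Y (e.symm i) u then (1:ℤ) else 0) - (if R X Y u (e.symm i) then (1:ℤ) else 0)))
    ext z
    simp only [imbalanceSet, Finset.mem_image, Finset.mem_univ, true_and, Finset.mem_union]
    constructor
    · rintro ⟨i, rfl⟩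
      rw [himb i]
      obtain ⟨b, j⟩ := e.symm i
      have hb := b.2
      rw [mem_product] at hb
      by_cases hj : (j : ℕ) < (-b.1.2).toNat
      · rw [if_pos hj]; exact Or.inl hb.1
      · rw [if_neg hj]; exact Or.inr hb.2
    · rintro (hz | hz)
      · obtain ⟨y0, hy0⟩ := hYne
        have hz' := (hX _ hz).1
        have hy' := (hY _ hy0).1
        have hp : (z, y0) ∈ X ×ˢ Y := mem_product.mpr ⟨hz, hy0⟩
        have hpos : 0 < sz (z, y0) := by
          show (0:ℕ) < (z - y0).toNat
          omega
        refine ⟨e ⟨⟨(z, y0), hp⟩, ⟨0, hpos⟩⟩, ?_⟩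
        rw [himb, Equiv.symm_apply_apply]
        have h0 : ((⟨⟨(z, y0), hp⟩, ⟨0, hpos⟩⟩ : V X Y)).2.val
            < (-((⟨⟨(z, y0), hp⟩, ⟨0, hpos⟩⟩ : V X Y)).1.1.2).toNat := by
          show (0:ℕ) < (-y0).toNat
          omega
        rw [if_pos h0]
      · obtain ⟨x0, hx0⟩ := hXne
        have hz' := (hY _ hz).1
        have hx' := (hX _ hx0).1
        have hp : (x0, z) ∈ X ×ˢ Y := mem_product.mpr ⟨hx0, hz⟩
        have hlt : (-(x0, z).2).toNat < sz (x0, z) := by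
          show (-z).toNat < (x0 - z).toNat
          omega
        refine ⟨e ⟨⟨(x0, z), hp⟩, ⟨(-(x0, z).2).toNat, hlt⟩⟩, ?_⟩
        rw [himb, Equiv.symm_apply_apply]
        rw [if_neg (lt_irrefl _)]
end

section
/- Let Z = X ∪ Y be a finite nonempty set of even integers with 0 ∈ Z, where X = {x₁, …, x_l} is the set of non-negative elements and Y = {−y₁, …, −y_m} is the set of negative elements of Z, both nonempty, with Z ≠ {0}. Let L = x₁ + ⋯ + x_l, M = y₁ + ⋯ + y_m and n = lM + mL. Then the minimal order of a tournament whose imbalance set is Z is at most n + 1. -/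
/-!
Halve the data. For each pair `(x, y) ∈ X × Y` take a complete bipartite oriented graph from
`|y| / 2` sources to `x / 2` sinks: the sources have imbalance `x / 2`, the sinks `y / 2`, and
there are `n / 2` vertices in all. Now double every vertex `p` of an oriented graph `d` into
twins `(p, true)`, `(p, false)` and add a hub `none`. Twins of adjacent vertices inherit the arc
of `d`; twins of non-adjacent vertices are joined in a balanced way, each beating exactly one
twin of the other pair; and the arc inside a twin pair is compensated by the arcs to the hub.
The result is a tournament on `n + 1` vertices with imbalances `2 t_d(p)` and `0`, i.e. with
imbalance set `Z`.

If `X` has no positive element, no tournament realizes `Z`, because imbalances sum to `0`; the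
infimum is then `sInf ∅ = 0`.
-/

open Finset

section Imbalance

variable {V : Type*} [Fintype V]

def imbalanceOf (s : V → V → Bool) (v : V) : ℤ := #{u | s v u} - #{u | s u v}

lemma imbalance_eq_imbalanceOf {n : ℕ} (r : Fin n → Fin n → Bool) :
    imbalance r = imbalanceOf r := rfl

lemma imbalanceOf_eq_sum (s : V → V → Bool) (v : V) :
    imbalanceOf s v = ∑ u, ((if s v u then 1 else 0) - if s u v then 1 else 0) := by
  simp only [imbalanceOf, card_filter, sum_sub_distrib, Nat.cast_sum, Nat.cast_ite,
    Nat.cast_one, Nat.cast_zero]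

lemma sum_imbalanceOf (s : V → V → Bool) : ∑ v, imbalanceOf s v = 0 := by
  simp only [imbalanceOf_eq_sum, sum_sub_distrib]
  rw [sum_comm, sub_self]

lemma exists_pos_imbalanceOf {s : V → V → Bool} {v : V} (hv : imbalanceOf s v < 0) :
    ∃ u, 0 < imbalanceOf s u := by
  by_contra! h
  have := (sum_eq_zero_iff_of_nonpos fun u _ => h u).1 (sum_imbalanceOf s) v (mem_univ v)
  omega

lemma imbalanceOf_comp_equiv {W : Type*} [Fintype W] (s : V → V → Bool) (e : W ≃ V) (w : W) :
    imbalanceOf (fun a b => s (e a) (e b)) w = imbalanceOf s (e w) := by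
  simp only [imbalanceOf_eq_sum]
  exact e.sum_comp fun u => ((if s (e w) u then 1 else 0) - if s u (e w) then 1 else 0)

lemma exists_tournament_of_card_eq {k : ℕ} (s : V → V → Bool) (hirr : ∀ v, s v v = false)
    (hanti : ∀ v u, v ≠ u → s v u = !s u v) (hk : Fintype.card V = k) :
    ∃ r : Fin k → Fin k → Bool,
      IsTournament r ∧ (imbalanceSet r : Set ℤ) = Set.range (imbalanceOf s) := by
  let e : Fin k ≃ V := (Fintype.equivFinOfCardEq hk).symm
  refine ⟨fun i j => s (e i) (e j),
    ⟨fun i => hirr _, fun i j hij => hanti _ _ (e.injective.ne hij)⟩, ?_⟩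
  ext z
  simp [imbalanceSet, imbalance_eq_imbalanceOf, imbalanceOf_comp_equiv, e.surjective.exists]

end Imbalance

section BlowUp

variable {P : Type*} [LinearOrder P] (d : P → P → Bool)

def blowUp : Option (P × Bool) → Option (P × Bool) → Bool
  | none, none => false
  | none, some (_, e) => e
  | some (_, e), none => !e
  | some (p, e), some (q, f) =>
      if p = q then e && !f
      else if d p q then true
      else if d q p then false
      else decide (p < q) == (e == f)

lemma blowUp_irrefl (v : Option (P × Bool)) : blowUp d v v = false := by
  rcases v with _ | ⟨p, e⟩ <;> simp [blowUp]

lemma blowUp_antisymm (hd : ∀ p q, d p q → d q p = false) (v u : Option (P × Bool))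
    (hvu : v ≠ u) : blowUp d v u = !blowUp d u v := by
  rcases v with _ | ⟨p, e⟩ <;> rcases u with _ | ⟨q, f⟩
  · exact absurd rfl hvu
  · simp [blowUp]
  · simp [blowUp]
  by_cases hpq : p = q
  · subst hpq
    cases e <;> cases f <;> simp_all [blowUp]
  · have hqp : q ≠ p := Ne.symm hpq
    simp only [blowUp, hpq, hqp, if_false]
    cases hd1 : d p q <;> cases hd2 : d q p
    · rcases lt_or_gt_of_ne hpq with h | h <;> cases e <;> cases f <;> simp [h, h.not_gt]
    · simp
    · simp
    · simp [hd p q hd1] at hd2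

lemma sum_blowUp_twins (p q : P) (e : Bool) (hpq : p ≠ q) :
    ∑ f, ((if blowUp d (some (p, e)) (some (q, f)) then 1 else 0) -
        if blowUp d (some (q, f)) (some (p, e)) then 1 else 0 : ℤ) =
      2 * ((if d p q then 1 else 0) - if d q p then 1 else 0) := by
  have hqp : q ≠ p := Ne.symm hpq
  simp only [Fintype.sum_bool, blowUp, hpq, hqp, if_false]
  cases d p q <;> cases d q p
  · rcases lt_or_gt_of_ne hpq with h | h <;> cases e <;> simp [h, h.not_gt]
  all_goals simp

variable [Fintype P]

lemma imbalanceOf_blowUp_none : imbalanceOf (blowUp d) none = 0 := by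
  rw [imbalanceOf_eq_sum, Fintype.sum_option, Fintype.sum_prod_type]
  simp [blowUp]

lemma imbalanceOf_blowUp_some (p : P) (e : Bool) :
    imbalanceOf (blowUp d) (some (p, e)) = 2 * imbalanceOf d p := by
  rw [imbalanceOf_eq_sum, imbalanceOf_eq_sum, Fintype.sum_option, Fintype.sum_prod_type,
    ← sum_erase_add _ _ (mem_univ p), ← sum_erase_add _ _ (mem_univ p), mul_add, mul_sum,
    sum_congr rfl fun q hq => sum_blowUp_twins d p q e (ne_of_mem_erase hq).symm]
  cases e <;> simp [blowUp]

lemma range_imbalanceOf_blowUp :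
    Set.range (imbalanceOf (blowUp d)) = insert 0 ((2 * ·) '' Set.range (imbalanceOf d)) := by
  ext z
  simp only [Set.mem_range, Set.mem_insert_iff, Set.mem_image, exists_exists_eq_and,
    Option.exists, Prod.exists, imbalanceOf_blowUp_none, imbalanceOf_blowUp_some]
  constructor
  · rintro (h | ⟨p, -, h⟩)
    exacts [Or.inl h.symm, Or.inr ⟨p, h⟩]
  · rintro (h | ⟨p, h⟩)
    exacts [Or.inl h.symm, Or.inr ⟨p, true, h⟩]

end BlowUp

section SigmaBiclique

variable {I : Type*} [DecidableEq I] (w l : I → ℕ)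

def sigmaBiclique (p q : Σ i, Fin (w i) ⊕ Fin (l i)) : Bool :=
  decide (p.1 = q.1) && p.2.isLeft && q.2.isRight

lemma sigmaBiclique_asymm (p q : Σ i, Fin (w i) ⊕ Fin (l i)) (h : sigmaBiclique w l p q) :
    sigmaBiclique w l q p = false := by
  rcases p with ⟨i, a | a⟩ <;> rcases q with ⟨j, b | b⟩ <;> simp_all [sigmaBiclique]

variable [Fintype I]

lemma imbalanceOf_sigmaBiclique_inl (i : I) (a : Fin (w i)) :
    imbalanceOf (sigmaBiclique w l) ⟨i, .inl a⟩ = l i := by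
  rw [imbalanceOf_eq_sum, Fintype.sum_sigma, sum_eq_single i]
  · rw [Fintype.sum_sum_type]
    simp [sigmaBiclique]
  · intro j _ hj
    simp [sigmaBiclique, hj, Ne.symm hj]
  · simp

lemma imbalanceOf_sigmaBiclique_inr (i : I) (b : Fin (l i)) :
    imbalanceOf (sigmaBiclique w l) ⟨i, .inr b⟩ = -w i := by
  rw [imbalanceOf_eq_sum, Fintype.sum_sigma, sum_eq_single i]
  · rw [Fintype.sum_sum_type]
    simp [sigmaBiclique]
  · intro j _ hj
    simp [sigmaBiclique, hj, Ne.symm hj]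
  · simp

lemma range_imbalanceOf_sigmaBiclique :
    Set.range (imbalanceOf (sigmaBiclique w l)) =
      (fun i => (l i : ℤ)) '' {i | 0 < w i} ∪ (fun i => -(w i : ℤ)) '' {i | 0 < l i} := by
  ext z
  simp only [Set.mem_range, Sigma.exists, Sum.exists, imbalanceOf_sigmaBiclique_inl,
    imbalanceOf_sigmaBiclique_inr, exists_const_iff, Set.mem_union, Set.mem_image,
    Set.mem_ofPred_eq, exists_or, ← Fin.pos_iff_nonempty]

end SigmaBiclique

lemma two_mul_natAbs_div_two {z : ℤ} (hz : Even z) : 2 * ((z.natAbs / 2 : ℕ) : ℤ) = |z| := by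
  obtain ⟨k, rfl⟩ := hz
  rw [Int.abs_eq_natAbs]
  omega

lemma two_mul_sum_natAbs_div_two {S : Finset ℤ} (hS : ∀ z ∈ S, Even z) :
    2 * ∑ z : ↥S, ((z.1.natAbs / 2 : ℕ) : ℤ) = ∑ z ∈ S, |z| := by
  rw [mul_sum, sum_coe_sort S fun z => 2 * ((z.natAbs / 2 : ℕ) : ℤ)]
  exact sum_congr rfl fun z hz => two_mul_natAbs_div_two (hS z hz)

lemma two_mul_sum_prod_natAbs_div_two {X Y : Finset ℤ} (hXeven : ∀ x ∈ X, Even x)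
    (hYeven : ∀ y ∈ Y, Even y) :
    2 * ∑ i : ↥X × ↥Y, (((i.2.1.natAbs / 2 : ℕ) : ℤ) + ((i.1.1.natAbs / 2 : ℕ) : ℤ)) =
      #X * ∑ y ∈ Y, |y| + #Y * ∑ x ∈ X, |x| := by
  simp only [Fintype.sum_prod_type, sum_add_distrib, sum_const, card_univ, Fintype.card_coe,
    nsmul_eq_mul, ← mul_sum, mul_add, mul_left_comm (2 : ℤ), two_mul_sum_natAbs_div_two hXeven,
    two_mul_sum_natAbs_div_two hYeven]

lemma image_two_mul_range_imbalanceOf_sigmaBiclique {X Y : Finset ℤ}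
    (hXeven : ∀ x ∈ X, Even x) (hYeven : ∀ y ∈ Y, Even y) (hX : ∀ x ∈ X, 0 ≤ x)
    (hY : ∀ y ∈ Y, y < 0) (hpos : ∃ x ∈ X, 0 < x) (hYne : Y.Nonempty) :
    (2 * ·) '' Set.range (imbalanceOf (sigmaBiclique (fun i : ↥X × ↥Y => i.2.1.natAbs / 2)
      fun i => i.1.1.natAbs / 2)) = ↑(X ∪ Y) := by
  have hx2 (x : ℤ) (hx : x ∈ X) : 2 * ((x.natAbs / 2 : ℕ) : ℤ) = x := by
    rw [two_mul_natAbs_div_two (hXeven x hx), abs_of_nonneg (hX x hx)]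
  have hy2 (y : ℤ) (hy : y ∈ Y) : 2 * ((y.natAbs / 2 : ℕ) : ℤ) = -y := by
    rw [two_mul_natAbs_div_two (hYeven y hy), abs_of_neg (hY y hy)]
  rw [range_imbalanceOf_sigmaBiclique, Set.image_union, coe_union]
  congr 1 <;> ext z <;>
    simp only [Set.image_image, Set.mem_image, Set.mem_ofPred_eq, Prod.exists, Subtype.exists,
      mem_coe, mul_neg]
  · constructor
    · rintro ⟨x, hx, -, -, -, rfl⟩
      rwa [hx2 x hx]
    · intro hz
      obtain ⟨y, hy⟩ := hYne
      have := hy2 y hy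
      have := hY y hy
      exact ⟨z, hz, y, hy, by omega, hx2 z hz⟩
  · constructor
    · rintro ⟨-, -, y, hy, -, rfl⟩
      rwa [hy2 y hy, neg_neg]
    · intro hz
      obtain ⟨x, hx, hxpos⟩ := hpos
      have := hx2 x hx
      exact ⟨x, hx, z, hz, by omega, by rw [hy2 z hz, neg_neg]⟩

lemma exists_tournament_imbalanceSet_eq {X Y : Finset ℤ} (hXeven : ∀ x ∈ X, Even x)
    (hYeven : ∀ y ∈ Y, Even y) (hX : ∀ x ∈ X, 0 ≤ x) (hY : ∀ y ∈ Y, y < 0)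
    (hpos : ∃ x ∈ X, 0 < x) (hYne : Y.Nonempty) {n : ℕ}
    (hn : (n : ℤ) = #X * ∑ y ∈ Y, -y + #Y * ∑ x ∈ X, x) :
    ∃ r : Fin (n + 1) → Fin (n + 1) → Bool,
      IsTournament r ∧ imbalanceSet r = insert 0 (X ∪ Y) := by
  let w : ↥X × ↥Y → ℕ := fun i => i.2.1.natAbs / 2
  let l : ↥X × ↥Y → ℕ := fun i => i.1.1.natAbs / 2
  let _ : LinearOrder (Σ i, Fin (w i) ⊕ Fin (l i)) :=
    LinearOrder.lift' _ (Fintype.equivFin _).injective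
  have hcard : Fintype.card (Option ((Σ i, Fin (w i) ⊕ Fin (l i)) × Bool)) = n + 1 := by
    simp only [Fintype.card_option, Fintype.card_prod, Fintype.card_sigma, Fintype.card_sum,
      Fintype.card_fin, Fintype.card_bool, add_left_inj]
    zify
    rw [mul_comm, hn, two_mul_sum_prod_natAbs_div_two hXeven hYeven,
      sum_congr rfl fun y hy => abs_of_neg (hY y hy),
      sum_congr rfl fun x hx => abs_of_nonneg (hX x hx)]
  obtain ⟨r, hr, hrange⟩ := exists_tournament_of_card_eq _ (blowUp_irrefl _)
    (blowUp_antisymm _ (sigmaBiclique_asymm w l)) hcard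
  refine ⟨r, hr, coe_injective ?_⟩
  rw [hrange, range_imbalanceOf_blowUp,
    image_two_mul_range_imbalanceOf_sigmaBiclique hXeven hYeven hX hY hpos hYne, coe_insert]

lemma imbalanceSet_ne_of_nonpos {k : ℕ} (r : Fin k → Fin k → Bool) {Z : Finset ℤ}
    (hZ : ∀ z ∈ Z, z ≤ 0) (hneg : ∃ z ∈ Z, z < 0) : imbalanceSet r ≠ Z := by
  rintro rfl
  obtain ⟨z, hz, hz0⟩ := hneg
  obtain ⟨i, -, rfl⟩ := mem_image.1 hz
  obtain ⟨j, hj⟩ := exists_pos_imbalanceOf hz0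
  exact (hZ _ (mem_image_of_mem _ (mem_univ j))).not_gt hj

theorem even_min_order_le_of_zero_mem_general (Z X Y : Finset ℤ)
    (heven : ∀ z ∈ Z, Even z) (h0 : (0 : ℤ) ∈ Z)
    (hZ : Z = X ∪ Y) (hYne : Y.Nonempty)
    (hX : ∀ x ∈ X, 0 ≤ x) (hY : ∀ y ∈ Y, y < 0)
    (L M : ℤ) (hL : L = ∑ x ∈ X, x) (hM : M = ∑ y ∈ Y, -y)
    (n : ℕ) (hn : (n : ℤ) = X.card * M + Y.card * L) :
    sInf {k : ℕ | ∃ r : Fin k → Fin k → Bool,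
      IsTournament r ∧ imbalanceSet r = Z} ≤ n + 1 := by
  subst hZ hL hM
  by_cases hpos : ∃ x ∈ X, 0 < x
  · obtain ⟨r, hr, hrZ⟩ :=
      exists_tournament_imbalanceSet_eq (fun x hx => heven x (mem_union_left Y hx))
        (fun y hy => heven y (mem_union_right X hy)) hX hY hpos hYne hn
    exact Nat.sInf_le ⟨r, hr, by rw [hrZ, insert_eq_of_mem h0]⟩
  · push Not at hpos
    have hnonpos : ∀ z ∈ X ∪ Y, z ≤ 0 := by
      intro z hz
      rcases mem_union.1 hz with hz | hz
      exacts [hpos z hz, (hY z hz).le]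
    obtain ⟨y, hy⟩ := hYne
    have hempty : {k : ℕ | ∃ r : Fin k → Fin k → Bool,
        IsTournament r ∧ imbalanceSet r = X ∪ Y} = ∅ :=
      Set.eq_empty_of_forall_notMem fun k ⟨r, _, hr⟩ =>
        imbalanceSet_ne_of_nonpos r hnonpos ⟨y, mem_union_right X hy, hY y hy⟩ hr
    rw [hempty, Nat.sInf_empty]
    exact Nat.zero_le _

/-- In the even case with `0 ∈ Z`, the minimal order of a
tournament with imbalance set `Z = X ∪ Y` is at most `n + 1`. -/
theorem even_min_order_le_of_zero_mem (Z X Y : Finset ℤ)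
    (hZne : Z.Nonempty) (heven : ∀ z ∈ Z, Even z) (h0 : (0 : ℤ) ∈ Z)
    (hZ : Z = X ∪ Y) (hXne : X.Nonempty) (hYne : Y.Nonempty)
    (hX : ∀ x ∈ X, 0 ≤ x) (hY : ∀ y ∈ Y, y < 0) (hZ0 : Z ≠ {0})
    (L M : ℤ) (hL : L = ∑ x ∈ X, x) (hM : M = ∑ y ∈ Y, -y)
    (n : ℕ) (hn : (n : ℤ) = X.card * M + Y.card * L) :
    sInf {k : ℕ | ∃ r : Fin k → Fin k → Bool,
      IsTournament r ∧ imbalanceSet r = Z} ≤ n + 1 :=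
  even_min_order_le_of_zero_mem_general Z X Y heven h0 hZ hYne hX hY L M hL hM n hn
end
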